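/- arXiv:1408.6131 — 4 statements merged into one kernel-verified Lean document; each statement's English description precedes it below -/
import Mathlib

section
/- For every nonnegative integer n, the map w is a bijection from the set of extended link patterns on {1,…,n} to the set of 01-words of length n. -/
open scoped Classical

namespace HFPLpaper2014

noncomputable section

/-! ### 01-words.  `true` represents the letter 1, `false` the letter 0. -/

abbrev Word := List Bool

/-- `|ω|₁`, the number of occurrences of the letter 1. -/
def c1 (w : Word) : ℕ := w.count true

/-- `|ω|₀`, the number of occurrences of the letter 0. -/
def c0 (w : Word) : ℕ := w.count false

/-- `d(ω)`, the number of inversions of `ω`, i.e. of pairs `k < ℓ` with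
`ω_k = 1` and `ω_ℓ = 0`. -/
def dinv : Word → ℕ
  | [] => 0
  | x :: xs => (if x = true then xs.count false else 0) + dinv xs

/-- The dominance order `ω ≤ σ` on 01-words: every prefix of `ω` contains at most as
many ones as the corresponding prefix of `σ`. -/
def wordLE (u v : Word) : Prop :=
  ∀ m : ℕ, (u.take m).count true ≤ (v.take m).count true

/-- the complement `ω̄` of a word -/
def wbar (w : Word) : Word := w.map (fun x => !x)

/-- `ω* = reverse of the complement` of a word -/
def wstar (w : Word) : Word := (w.map (fun x => !x)).reverse
/-! ### Extended link patterns, directed extended link patterns and the matrices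
`M_b(n)`, `M_t(n)`. -/

/-- The role of a point of an extended link pattern: a left point, a right point,
or a point matched with another point. -/
inductive PRole (n : ℕ) : Type where
  | left : PRole n
  | right : PRole n
  | matched : Fin n → PRole n

/-- An extended link pattern on `{1,…,n}`: each point is a left point, a right
point or matched to another point; the matching is symmetric, fixed-point free and
non-crossing; every left point precedes every right point; and no left or right
point lies strictly between two matched points. -/
structure ELP (n : ℕ) where
  role : Fin n → PRole n
  matched_symm : ∀ i j, role i = PRole.matched j → role j = PRole.matched i
  matched_ne : ∀ i j, role i = PRole.matched j → i ≠ j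
  left_lt_right : ∀ i j, role i = PRole.left → role j = PRole.right → i < j
  noncross : ∀ i j k l : Fin n, i < j → j < k → k < l →
    role i = PRole.matched k → role j ≠ PRole.matched l
  nounder : ∀ i j k, role i = PRole.matched j → i < k → k < j →
    ∃ l, role k = PRole.matched l

/-- The letter that the map `w` assigns to the point `i` of an extended link
pattern: `1` at a left point, `0` at a right point, `0` at the smaller and `1` at
the larger point of a matched pair. -/
def letterOf {n : ℕ} (π : ELP n) (i : Fin n) : Bool :=
  match π.role i with
  | PRole.left => true
  | PRole.right => false
  | PRole.matched j => if j < i then true else false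

/-- The map `w` from extended link patterns on `{1,…,n}` to 01-words of length `n`. -/
def wmapL {n : ℕ} (π : ELP n) : {w : Word // w.length = n} :=
  ⟨List.ofFn (fun i => letterOf π i), by simp⟩

/-- the function-word version of the map `w` -/
def wmapF {n : ℕ} (π : ELP n) : Fin n → Bool := fun i => letterOf π i

/-- A directed extended link pattern: an extended link pattern in which every point
is a source or a sink, such that every matched pair consists of one source and one
sink. -/
structure DELP (n : ℕ) extends ELP n where
  isSource : Fin n → Bool
  pair_mixed : ∀ i j, role i = PRole.matched j → isSource i = ! isSource j

/-- the source-sink-word of a directed extended link pattern: `0` at sources,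
`1` at sinks -/
def sswF {n : ℕ} (π : DELP n) : Fin n → Bool := fun i => ! π.isSource i

/-- `RL(π⃗)`, the number of matched pairs whose larger point is the source -/
def RLD {n : ℕ} (π : DELP n) : ℕ :=
  Nat.card {p : Fin n × Fin n // p.1 < p.2 ∧ π.toELP.role p.1 = PRole.matched p.2 ∧
    π.isSource p.2 = true}

/-- `π⃗` witnesses that `w'` is feasible for `w` -/
def FeasibleData {n : ℕ} (w w' : Fin n → Bool) (π : DELP n) : Prop :=
  wmapF π.toELP = w' ∧ sswF π = w

/-- `w'` is feasible for `w` -/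
def Feasible {n : ℕ} (w w' : Fin n → Bool) : Prop := ∃ π : DELP n, FeasibleData w w' π

/-- `g(w,w') = RL(π⃗)` for the (unique) directed extended link pattern witnessing
feasibility -/
def gfun {n : ℕ} (w w' : Fin n → Bool) : ℕ :=
  if h : Feasible w w' then RLD h.choose else 0

/-- `w'` is left-points-fixing feasible for `w` (the witnessing pattern is
left-hand-incoming, i.e. all left points are sinks). -/
def lpfFeasible {n : ℕ} (w w' : Fin n → Bool) : Prop :=
  ∃ π : DELP n, FeasibleData w w' π ∧
    ∀ i, π.toELP.role i = PRole.left → π.isSource i = false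

/-- `w'` is right-points-fixing feasible for `w` (the witnessing pattern is
right-hand-outgoing, i.e. all right points are sources). -/
def rpfFeasible {n : ℕ} (w w' : Fin n → Bool) : Prop :=
  ∃ π : DELP n, FeasibleData w w' π ∧
    ∀ i, π.toELP.role i = PRole.right → π.isSource i = true

/-- The matrix `M_b(n)` over `ℚ(q)`. -/
def Mb (n : ℕ) : Matrix (Fin n → Bool) (Fin n → Bool) (RatFunc ℚ) :=
  Matrix.of fun w w' =>
    if lpfFeasible w w' then (RatFunc.X : RatFunc ℚ) ^ (gfun w w') else 0

/-- The matrix `M_t(n)` over `ℚ(q)`. -/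
def Mt (n : ℕ) : Matrix (Fin n → Bool) (Fin n → Bool) (RatFunc ℚ) :=
  Matrix.of fun w w' =>
    if rpfFeasible w w' then (RatFunc.X : RatFunc ℚ) ^ (-(gfun w w' : ℤ)) else 0

/-- a 01-word of length `n` (as a list) viewed as a function-word -/
def fnw (n : ℕ) (w : Word) : Fin n → Bool := fun i => w.getD i false

/-!
Read a `0` as an opening and a `1` as a closing bracket, and let the height of a word at `m` be
the number of `0`s minus the number of `1`s among its first `m` letters. Matching each `0` with the
`1` at which the height first returns to its level, and declaring the unmatched `1`s left points and
the unmatched `0`s right points, gives an extended link pattern with that word. Conversely, in an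
extended link pattern the partner map is an involution exchanging `0`s and `1`s on the interval
spanned by any pair, so the height returns to its level across every pair; hence every pair is a
matched bracket pair of its word, and the pattern is the one recovered from the word.
-/

open Finset

section Height

variable (u : ℕ → Bool)

def height (m : ℕ) : ℤ := ∑ k ∈ range m, if u k then -1 else 1

theorem height_succ (m : ℕ) : height u (m + 1) = height u m + if u m then -1 else 1 :=
  sum_range_succ _ _

variable {u}

theorem height_succ_of_false {m : ℕ} (h : u m = false) : height u (m + 1) = height u m + 1 := by
  simp [height_succ, h]

theorem height_succ_of_true {m : ℕ} (h : u m = true) : height u (m + 1) = height u m - 1 := by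
  simp [height_succ, h, sub_eq_add_neg]

theorem height_succ_le (m : ℕ) : height u (m + 1) ≤ height u m + 1 := by
  rw [height_succ]; split <;> omega

theorem sub_one_le_height_succ (m : ℕ) : height u m - 1 ≤ height u (m + 1) := by
  rw [height_succ]; split <;> omega

theorem height_sub_height {a b : ℕ} (hab : a ≤ b) :
    height u b - height u a = ∑ k ∈ Ico a b, if u k then -1 else 1 :=
  (sum_Ico_eq_sub _ hab).symm

/-- `i` and `j` are matched brackets of `u`: after `i` the height first comes back to
`height u i` at `j + 1`. -/
structure IsArc (u : ℕ → Bool) (i j : ℕ) : Prop where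
  lt : i < j
  height_eq : height u (j + 1) = height u i
  height_lt : ∀ m, i < m → m ≤ j → height u i < height u m

namespace IsArc

variable {i j : ℕ}

theorem left_eq_false (h : IsArc u i j) : u i = false := by
  by_contra hu
  have := h.height_lt (i + 1) (by omega) h.lt
  rw [height_succ_of_true (by simpa using hu)] at this
  omega

theorem right_eq_true (h : IsArc u i j) : u j = true := by
  by_contra hu
  have := h.height_lt j h.lt le_rfl
  have := height_succ_of_false (by simpa using hu : u j = false)
  have := h.height_eq
  omega

theorem le_of_height_eq {k : ℕ} (h : IsArc u i j) (hik : i ≤ k)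
    (hk : height u (k + 1) = height u i) : j ≤ k := by
  by_contra hkj
  exact (h.height_lt (k + 1) (by omega) (by omega)).ne' hk

theorem le_of_height_eq' {l : ℕ} (h : IsArc u i j) (hlj : l ≤ j)
    (hl : height u l = height u (j + 1)) : l ≤ i := by
  by_contra hil
  exact (h.height_lt l (by omega) hlj).ne' (hl.trans h.height_eq)

theorem right_unique {j' : ℕ} (h : IsArc u i j) (h' : IsArc u i j') : j = j' :=
  le_antisymm (h.le_of_height_eq h'.lt.le h'.height_eq) (h'.le_of_height_eq h.lt.le h.height_eq)

theorem left_unique {i' : ℕ} (h : IsArc u i j) (h' : IsArc u i' j) : i = i' :=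
  le_antisymm (h'.le_of_height_eq' h.lt.le h.height_eq.symm)
    (h.le_of_height_eq' h'.lt.le h'.height_eq.symm)

theorem nested {k l : ℕ} (hik : IsArc u i k) (hjl : IsArc u j l) (hij : i < j) (hjk : j < k) :
    l < k := by
  have hlk : l ≠ k := fun hlk => hij.ne (hik.left_unique (hlk ▸ hjl))
  refine lt_of_le_of_ne (not_lt.1 fun hkl => ?_) hlk
  have := hjl.height_lt (k + 1) (by omega) hkl
  have := hik.height_lt j hij hjk.le
  have := hik.height_eq
  omega

end IsArc

theorem exists_isArc_of_height_le {i m : ℕ} (hu : u i = false) (him : i < m)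
    (hm : height u m ≤ height u i) : ∃ j < m, IsArc u i j := by
  classical
  have hex : ∃ r, i < r ∧ height u r ≤ height u i := ⟨m, him, hm⟩
  obtain ⟨r, ⟨hir, hr⟩, hrm, hbefore⟩ : ∃ r, (i < r ∧ height u r ≤ height u i) ∧ r ≤ m ∧
      ∀ s, i < s → s < r → height u i < height u s :=
    ⟨_, Nat.find_spec hex, Nat.find_min' hex ⟨him, hm⟩,
      fun s h1 h2 => lt_of_not_ge fun h => Nat.find_min hex h2 ⟨h1, h⟩⟩
  have hup := height_succ_of_false hu
  have hir' : i + 1 ≠ r := fun he => by rw [← he] at hr; omega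
  obtain ⟨j, rfl⟩ : ∃ j, r = j + 1 := ⟨r - 1, by omega⟩
  have hprev := hbefore j (by omega) (by omega)
  have hstep := sub_one_le_height_succ (u := u) j
  exact ⟨j, by omega, by omega, by omega, fun s h1 h2 => hbefore s h1 (by omega)⟩

theorem exists_isArc_of_height_le_height_succ {k m : ℕ} (hu : u k = true) (hmk : m ≤ k)
    (hm : height u m ≤ height u (k + 1)) : ∃ i, IsArc u i k := by
  classical
  obtain ⟨s, hsk, hs, hafter⟩ : ∃ s ≤ k, height u s ≤ height u (k + 1) ∧
      ∀ r, s < r → r ≤ k → height u (k + 1) < height u r :=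
    ⟨_, Nat.findGreatest_le k,
      Nat.findGreatest_spec (P := fun r => height u r ≤ height u (k + 1)) hmk hm,
      fun r h1 h2 => lt_of_not_ge (Nat.findGreatest_is_greatest h1 h2)⟩
  have hdown := height_succ_of_true hu
  have hsk' : s ≠ k := fun he => by rw [he] at hs; omega
  have hnext := hafter (s + 1) (by omega) (by omega)
  have hstep := height_succ_le (u := u) s
  exact ⟨s, ⟨by omega, by omega, fun r h1 h2 => by have := hafter r h1 h2; omega⟩⟩

theorem height_lt_of_forall_not_isArc {i m : ℕ} (hu : u i = false) (h : ∀ j, ¬IsArc u i j)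
    (him : i < m) : height u i < height u m :=
  lt_of_not_ge fun hm => by
    obtain ⟨j, -, hj⟩ := exists_isArc_of_height_le hu him hm
    exact h j hj

theorem height_succ_lt_of_forall_not_isArc {k m : ℕ} (hu : u k = true) (h : ∀ i, ¬IsArc u i k)
    (hmk : m ≤ k) : height u (k + 1) < height u m :=
  lt_of_not_ge fun hm => by
    obtain ⟨i, hi⟩ := exists_isArc_of_height_le_height_succ hu hmk hm
    exact h i hi

end Height

namespace ELP

variable {n : ℕ} (π : ELP n) {i j k : Fin n}

theorem role_injective : Function.Injective (role : ELP n → Fin n → PRole n) := by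
  rintro ⟨r₁⟩ ⟨r₂⟩ (rfl : r₁ = r₂)
  rfl

theorem letterOf_of_left (h : π.role i = .left) : letterOf π i = true := by
  simp [letterOf, h]

theorem letterOf_of_right (h : π.role i = .right) : letterOf π i = false := by
  simp [letterOf, h]

theorem letterOf_of_matched (h : π.role i = .matched j) : letterOf π i = decide (j < i) := by
  simp [letterOf, h]

theorem letterOf_partner (h : π.role i = .matched j) : letterOf π j = !letterOf π i := by
  rw [π.letterOf_of_matched h, π.letterOf_of_matched (π.matched_symm i j h)]
  rcases lt_or_gt_of_ne (π.matched_ne i j h) with hij | hji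
  · simp [hij, hij.not_gt]
  · simp [hji, hji.not_gt]

theorem lt_of_lt_of_matched {a b p : Fin n} (hab : π.role a = .matched b)
    (hp : ∀ c, π.role p ≠ .matched c) (hpb : p < b) : p < a := by
  by_contra! hap
  rcases hap.lt_or_eq with hap | rfl
  · obtain ⟨c, hc⟩ := π.nounder a b p hab hap hpb
    exact hp c hc
  · exact hp b hab

theorem lt_of_lt_of_matched' {a b p : Fin n} (hab : π.role a = .matched b)
    (hp : ∀ c, π.role p ≠ .matched c) (hap : a < p) : b < p := by
  by_contra! hpb
  rcases hpb.lt_or_eq with hpb | rfl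
  · exact (π.lt_of_lt_of_matched hab hp hpb).not_gt hap
  · exact hp a (π.matched_symm a p hab)

theorem exists_matched_of_lt_of_lt (hij : π.role i = .matched j) (hik : i < k) (hkj : k < j) :
    ∃ l, π.role k = .matched l ∧ i < l ∧ l < j := by
  obtain ⟨l, hkl⟩ := π.nounder i j k hij hik hkj
  have hlk := π.matched_symm k l hkl
  refine ⟨l, hkl, lt_of_not_ge fun hli => ?_, lt_of_not_ge fun hjl => ?_⟩
  · rcases hli.lt_or_eq with hli | rfl
    · exact π.noncross l i k j hli hik hkj hlk hij
    · exact hkj.ne (PRole.matched.inj (hlk.symm.trans hij))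
  · rcases hjl.lt_or_eq with hjl | rfl
    · exact π.noncross i k j l hik hkj hjl hij hkl
    · exact hik.ne (PRole.matched.inj ((π.matched_symm i j hij).symm.trans hlk))

theorem exists_matched_of_le_of_le (hij : π.role i = .matched j) (hik : i ≤ k) (hkj : k ≤ j) :
    ∃ l, π.role k = .matched l ∧ i ≤ l ∧ l ≤ j := by
  rcases hik.lt_or_eq with hik | rfl
  · rcases hkj.lt_or_eq with hkj | rfl
    · obtain ⟨l, hkl, hil, hlj⟩ := π.exists_matched_of_lt_of_lt hij hik hkj
      exact ⟨l, hkl, hil.le, hlj.le⟩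
    · exact ⟨i, π.matched_symm i k hij, le_rfl, hik.le⟩
  · exact ⟨j, hij, hkj, le_rfl⟩

def partner (k : ℕ) : ℕ :=
  if h : k < n then
    match π.role ⟨k, h⟩ with
    | .matched l => l
    | _ => k
  else k

theorem partner_eq (h : π.role i = .matched j) : π.partner i = j := by
  simp [partner, h]

end ELP

section Canonical

variable {n : ℕ}

/-- Padding by `0`s creates no new arcs, since an arc ends at a `1`. -/
def padWord (w : Fin n → Bool) (k : ℕ) : Bool := if h : k < n then w ⟨k, h⟩ else false

@[simp]
theorem padWord_coe (w : Fin n → Bool) (i : Fin n) : padWord w i = w i := by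
  simp [padWord]

theorem IsArc.lt_of_padWord {w : Fin n → Bool} {i j : ℕ} (h : IsArc (padWord w) i j) : j < n := by
  by_contra hj
  simpa [padWord, hj] using h.right_eq_true

def canonicalRole (w : Fin n → Bool) (i : Fin n) : PRole n :=
  if h : ∃ j : Fin n, IsArc (padWord w) i j then .matched h.choose
  else if h' : ∃ j : Fin n, IsArc (padWord w) j i then .matched h'.choose
  else if w i then .left else .right

variable {w : Fin n → Bool} {i j : Fin n}

theorem canonicalRole_of_isArc (h : IsArc (padWord w) i j) :
    canonicalRole w i = .matched j ∧ canonicalRole w j = .matched i := by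
  have hfrom : ∃ j' : Fin n, IsArc (padWord w) i j' := ⟨j, h⟩
  have hto : ∃ i' : Fin n, IsArc (padWord w) i' j := ⟨i, h⟩
  have hnot : ¬∃ k : Fin n, IsArc (padWord w) j k := fun ⟨k, hk⟩ => by
    simpa [h.right_eq_true] using hk.left_eq_false
  refine ⟨?_, ?_⟩
  · rw [canonicalRole, dif_pos hfrom, Fin.ext (hfrom.choose_spec.right_unique h)]
  · rw [canonicalRole, dif_neg hnot, dif_pos hto, Fin.ext (hto.choose_spec.left_unique h)]

theorem isArc_or_isArc_of_canonicalRole (h : canonicalRole w i = .matched j) :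
    IsArc (padWord w) i j ∨ IsArc (padWord w) j i := by
  unfold canonicalRole at h
  split_ifs at h with hfrom hto
  · exact .inl (PRole.matched.inj h ▸ hfrom.choose_spec)
  · exact .inr (PRole.matched.inj h ▸ hto.choose_spec)

theorem isArc_of_canonicalRole (h : canonicalRole w i = .matched j) (hij : i < j) :
    IsArc (padWord w) i j :=
  (isArc_or_isArc_of_canonicalRole h).resolve_right fun h' => (Fin.lt_asymm hij) h'.lt

theorem canonicalRole_eq_left_iff :
    canonicalRole w i = .left ↔ w i = true ∧ ∀ k, ¬IsArc (padWord w) k i := by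
  unfold canonicalRole
  split_ifs with hfrom hto hw
  · obtain ⟨j, hj⟩ := hfrom
    simpa using fun hw => absurd hj.left_eq_false (by simpa using hw)
  · obtain ⟨k, hk⟩ := hto
    simpa using fun _ => ⟨k, hk⟩
  · exact iff_of_true rfl ⟨hw, fun k hk => hto ⟨⟨k, hk.lt.trans i.isLt⟩, hk⟩⟩
  · simp [hw]

theorem canonicalRole_eq_right_iff :
    canonicalRole w i = .right ↔ w i = false ∧ ∀ k, ¬IsArc (padWord w) i k := by
  unfold canonicalRole
  split_ifs with hfrom hto hw
  · obtain ⟨j, hj⟩ := hfrom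
    simpa using fun _ => ⟨j, hj⟩
  · obtain ⟨k, hk⟩ := hto
    simpa using fun hw => absurd hk.right_eq_true (by simpa using hw)
  · simp [hw]
  · exact iff_of_true rfl ⟨by simpa using hw, fun k hk => hfrom ⟨⟨k, hk.lt_of_padWord⟩, hk⟩⟩

theorem exists_canonicalRole_eq_matched_of_lt_of_lt (h : IsArc (padWord w) i j) {k : Fin n}
    (hik : i < k) (hkj : k < j) : ∃ l, canonicalRole w k = .matched l := by
  have hik : (i : ℕ) < k := hik
  have hkj : (k : ℕ) < j := hkj
  cases hk : w k
  · obtain ⟨l, hlj, hl⟩ := exists_isArc_of_height_le (u := padWord w) (m := j + 1)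
      (by simpa using hk) (by omega) (h.height_eq ▸ (h.height_lt k hik hkj.le).le)
    exact ⟨⟨l, hl.lt_of_padWord⟩, (canonicalRole_of_isArc hl).1⟩
  · obtain ⟨l, hl⟩ := exists_isArc_of_height_le_height_succ (u := padWord w) (by simpa using hk)
      hik.le (h.height_lt (k + 1) (by omega) hkj).le
    exact ⟨⟨l, hl.lt.trans k.isLt⟩, (canonicalRole_of_isArc hl).2⟩

variable (w) in
def canonicalELP : ELP n where
  role := canonicalRole w
  matched_symm i j h := by
    rcases isArc_or_isArc_of_canonicalRole h with h | h
    exacts [(canonicalRole_of_isArc h).2, (canonicalRole_of_isArc h).1]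
  matched_ne i j h := by
    rcases isArc_or_isArc_of_canonicalRole h with h | h
    exacts [Fin.ne_of_lt h.lt, Fin.ne_of_gt h.lt]
  left_lt_right i j hi hj := by
    obtain ⟨hwi, hto⟩ := canonicalRole_eq_left_iff.1 hi
    obtain ⟨hwj, hfrom⟩ := canonicalRole_eq_right_iff.1 hj
    have hij : i ≠ j := by rintro rfl; simp_all
    by_contra! hji
    have hji : (j : ℕ) < i := lt_of_le_of_ne hji (Fin.val_ne_of_ne hij.symm)
    have := height_lt_of_forall_not_isArc (by simpa using hwj) hfrom (m := i + 1) (by omega)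
    have := height_succ_lt_of_forall_not_isArc (by simpa using hwi) hto hji.le
    omega
  noncross i j k l hij hjk hkl hik hjl :=
    Fin.lt_asymm hkl ((isArc_of_canonicalRole hik (hij.trans hjk)).nested
      (isArc_of_canonicalRole hjl (hjk.trans hkl)) hij hjk)
  nounder i j k hij hik hkj :=
    exists_canonicalRole_eq_matched_of_lt_of_lt (isArc_of_canonicalRole hij (hik.trans hkj))
      hik hkj

theorem letterOf_canonicalELP (w : Fin n → Bool) (i : Fin n) :
    letterOf (canonicalELP w) i = w i := by
  rcases h : canonicalRole w i with _ | _ | j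
  · exact (ELP.letterOf_of_left _ h).trans (canonicalRole_eq_left_iff.1 h).1.symm
  · exact (ELP.letterOf_of_right _ h).trans (canonicalRole_eq_right_iff.1 h).1.symm
  · rw [ELP.letterOf_of_matched _ h]
    rcases isArc_or_isArc_of_canonicalRole h with h | h
    · simpa [Fin.lt_asymm h.lt] using h.left_eq_false.symm
    · simpa [show j < i from h.lt] using h.right_eq_true.symm

end Canonical

namespace ELP

variable {n : ℕ} (π : ELP n) {i j : Fin n}

theorem height_eq_of_matched (h : π.role i = .matched j) (hij : i < j) :
    height (padWord (wmapF π)) (j + 1) = height (padWord (wmapF π)) i := by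
  have hmatched : ∀ k ∈ Ico (i : ℕ) (j + 1), ∃ k' l : Fin n,
      (k' : ℕ) = k ∧ π.role k' = .matched l ∧ (l : ℕ) ∈ Ico (i : ℕ) (j + 1) := by
    intro k hk
    rw [mem_Ico] at hk
    obtain ⟨l, hkl, hil, hlj⟩ := π.exists_matched_of_le_of_le (k := ⟨k, by omega⟩) h
      (Fin.le_def.2 hk.1) (Fin.le_def.2 (by simp; omega))
    exact ⟨_, l, rfl, hkl, mem_Ico.2 ⟨hil, Nat.lt_succ_of_le hlj⟩⟩
  rw [← sub_eq_zero, height_sub_height (by omega)]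
  refine sum_involution (fun k _ => π.partner k) (fun k hk => ?_) (fun k hk _ => ?_)
    (fun k hk => ?_) (fun k hk => ?_) <;>
  obtain ⟨k, l, rfl, hkl, hl⟩ := hmatched k hk <;>
  simp only [π.partner_eq hkl]
  · simp only [padWord_coe, wmapF, π.letterOf_partner hkl]
    cases letterOf π k <;> simp
  · exact Fin.val_ne_of_ne (π.matched_ne k l hkl).symm
  · exact hl
  · exact π.partner_eq (π.matched_symm k l hkl)

theorem isArc_of_matched (h : π.role i = .matched j) (hij : i < j) :
    IsArc (padWord (wmapF π)) i j := by
  have hu : padWord (wmapF π) i = false := by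
    simpa [wmapF, π.letterOf_of_matched h] using hij.not_gt
  obtain ⟨j', hj', harc⟩ := exists_isArc_of_height_le hu (m := j + 1) (by omega)
    (π.height_eq_of_matched h hij).le
  -- A first return before `j + 1` would end at the `1` of a pair of `π` opening above `i`.
  suffices hj : j' = j from hj ▸ harc
  by_contra hne
  obtain ⟨k, rfl⟩ : ∃ k : Fin n, (k : ℕ) = j' := ⟨⟨j', by omega⟩, rfl⟩
  have hkj : k < j := Fin.lt_def.2 (by omega)
  obtain ⟨l, hkl, hil, hlj⟩ := π.exists_matched_of_lt_of_lt h harc.lt hkj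
  have hlk : l < k := by
    simpa [wmapF, π.letterOf_of_matched hkl] using harc.right_eq_true
  exact hil.not_ge
    (harc.le_of_height_eq' hlk.le (π.height_eq_of_matched (π.matched_symm k l hkl) hlk).symm)

theorem not_isArc_of_right (h : π.role i = .right) (j : ℕ) :
    ¬IsArc (padWord (wmapF π)) i j := by
  intro harc
  obtain ⟨k, rfl⟩ : ∃ k : Fin n, (k : ℕ) = j := ⟨⟨j, harc.lt_of_padWord⟩, rfl⟩
  have hk : letterOf π k = true := by simpa [wmapF] using harc.right_eq_true
  have hik : i < k := harc.lt
  rcases hr : π.role k with _ | _ | l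
  · exact (π.left_lt_right k i hr h).not_gt hik
  · simp [π.letterOf_of_right hr] at hk
  · have hlk : l < k := by simpa [π.letterOf_of_matched hr] using hk
    have hil := π.lt_of_lt_of_matched (π.matched_symm k l hr) (by simp [h]) hik
    exact hil.not_ge
      (harc.le_of_height_eq' hlk.le (π.height_eq_of_matched (π.matched_symm k l hr) hlk).symm)

theorem not_isArc_of_left (h : π.role i = .left) (j : ℕ) :
    ¬IsArc (padWord (wmapF π)) j i := by
  intro harc
  obtain ⟨k, rfl⟩ : ∃ k : Fin n, (k : ℕ) = j := ⟨⟨j, harc.lt.trans i.isLt⟩, rfl⟩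
  have hk : letterOf π k = false := by simpa [wmapF] using harc.left_eq_false
  have hki : k < i := harc.lt
  rcases hr : π.role k with _ | _ | l
  · simp [π.letterOf_of_left hr] at hk
  · exact (π.left_lt_right i k h hr).not_gt hki
  · have hkl : k < l := lt_of_le_of_ne (by simpa [π.letterOf_of_matched hr] using hk)
      (π.matched_ne k l hr)
    have hli := π.lt_of_lt_of_matched' hr (by simp [h]) hki
    exact hli.not_ge (harc.le_of_height_eq hkl.le (π.height_eq_of_matched hr hkl))

theorem canonicalRole_wmapF (i : Fin n) : canonicalRole (wmapF π) i = π.role i := by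
  rcases hr : π.role i with _ | _ | j
  · exact canonicalRole_eq_left_iff.2 ⟨π.letterOf_of_left hr, π.not_isArc_of_left hr⟩
  · exact canonicalRole_eq_right_iff.2 ⟨π.letterOf_of_right hr, π.not_isArc_of_right hr⟩
  · rcases lt_or_gt_of_ne (π.matched_ne i j hr) with hij | hji
    · exact (canonicalRole_of_isArc (π.isArc_of_matched hr hij)).1
    · exact (canonicalRole_of_isArc (π.isArc_of_matched (π.matched_symm i j hr) hji)).2

end ELP

section Equiv

variable {n : ℕ}

theorem canonicalELP_wmapF (π : ELP n) : canonicalELP (wmapF π) = π :=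
  ELP.role_injective (funext π.canonicalRole_wmapF)

theorem wmapF_canonicalELP (w : Fin n → Bool) : wmapF (canonicalELP w) = w :=
  funext (letterOf_canonicalELP w)

variable (n) in
def elpEquiv : ELP n ≃ (Fin n → Bool) where
  toFun := wmapF
  invFun := canonicalELP
  left_inv := canonicalELP_wmapF
  right_inv := wmapF_canonicalELP

end Equiv

/-- For every nonnegative integer `n`, the map `w` is a bijection
from the set of extended link patterns on `{1,…,n}` to the set of 01-words of
length `n`. -/
theorem wmap_bijective (n : ℕ) :
    Function.Bijective (fun π : ELP n => wmapL π) := by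
  have : (fun π : ELP n => wmapL π) = (elpEquiv n).trans (Equiv.vectorEquivFin Bool n).symm := by
    funext π
    exact Subtype.ext (List.Vector.toList_ofFn _).symm
  rw [this]
  exact Equiv.bijective _

end
end HFPLpaper2014
end

section
/- Let K, L, M, N be nonnegative integers with K ≤ M+N and N ≤ K+L, and let (l_T,t,r_T;r_B,b,l_B) be a sextuple of 01-words of lengths (K,L,M;N,K+L−N,M+N−K). If there exists an oriented HFPL of size (K,L,M,N) with boundary (l_T,t,r_T;r_B,b,l_B), i.e. if h⃗^{r_B,b,l_B}_{l_T,t,r_T} > 0, then |l_T|_0 + |t|_0 = |r_B|_0 + |b|_0 and |t|_1 + |r_T|_1 = |b|_1 + |l_B|_1. -/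
open scoped Classical

namespace HFPLpaper2014

noncomputable section

/-! ### The graph `H^{K,L,M,N}`, hexagonal fully packed loop configurations and
their oriented versions. -/

/-- vertices of the square lattice -/
abbrev V : Type := ℤ × ℤ

/-- The vertex set of the graph `H^{K,L,M,N}`. -/
def inH (K L M N : ℕ) (p : V) : Prop :=
  p.2 ≤ p.1 ∧ p.2 ≤ (K : ℤ) - 1 ∧ p.2 ≤ -p.1 + 2 * ((K : ℤ) + L) ∧
  -p.1 - 1 ≤ p.2 ∧ (K : ℤ) - M - N ≤ p.2 ∧ p.1 - 2 * ((M : ℤ) + L) - 1 ≤ p.2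

/-- adjacency in the square lattice `ℤ²` -/
def latAdj (p q : V) : Prop :=
  (p.1 = q.1 ∧ (p.2 = q.2 + 1 ∨ q.2 = p.2 + 1)) ∨
  (p.2 = q.2 ∧ (p.1 = q.1 + 1 ∨ q.1 = p.1 + 1))

/-- `L_{T,i+1}`, the leftmost vertex of the `(i+1)`-st (counted from the bottom of the
top `K` rows) row, `0 ≤ i < K`; numbered from left to right. -/
def LTv (i : ℕ) : V := ((i : ℤ), (i : ℤ))

/-- `T_{i+1}`, the odd vertices of the top row, `0 ≤ i < L`. -/
def TTv (K : ℕ) (i : ℕ) : V := ((K : ℤ) + 1 + 2 * i, (K : ℤ) - 1)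

/-- `R_{T,i+1}`, the rightmost vertices of the top `M` rows, `0 ≤ i < M`. -/
def RTv (K L : ℕ) (i : ℕ) : V := ((K : ℤ) + 2 * L + 1 + i, (K : ℤ) - 1 - i)

/-- `L_{B,i+1}`, the leftmost vertices of the bottom `M+N-K` rows, `0 ≤ i < M+N-K`. -/
def LBv (i : ℕ) : V := ((i : ℤ), -(i : ℤ) - 1)

/-- `B_{i+1}`, the even vertices of the bottom row, `0 ≤ i < K+L-N`. -/
def BBv (K M N : ℕ) (i : ℕ) : V := ((M : ℤ) + N - K + 1 + 2 * i, (K : ℤ) - M - N)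

/-- `R_{B,i+1}`, the rightmost vertices of the bottom `N` rows, `0 ≤ i < N`. -/
def RBv (K L M N : ℕ) (i : ℕ) : V := ((M : ℤ) + 2 * L + K - N + 1 + i, (K : ℤ) - M - N + i)

def inLT (K : ℕ) (p : V) : Prop := ∃ i, i < K ∧ p = LTv i
def inTT (K L : ℕ) (p : V) : Prop := ∃ i, i < L ∧ p = TTv K i
def inRT (K L M : ℕ) (p : V) : Prop := ∃ i, i < M ∧ p = RTv K L i
def inLB (K M N : ℕ) (p : V) : Prop := ∃ i, i < M + N - K ∧ p = LBv i
def inBB (K L M N : ℕ) (p : V) : Prop := ∃ i, i < K + L - N ∧ p = BBv K M N i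
def inRB (K L M N : ℕ) (p : V) : Prop := ∃ i, i < N ∧ p = RBv K L M N i

/-- `𝓛_T ∪ 𝓛_B ∪ 𝓡_T ∪ 𝓡_B` -/
def inLRset (K L M N : ℕ) (p : V) : Prop :=
  inLT K p ∨ inLB K M N p ∨ inRT K L M p ∨ inRB K L M N p

/-- `𝓣 ∪ 𝓑` -/
def inTBset (K L M N : ℕ) (p : V) : Prop := inTT K L p ∨ inBB K L M N p

/-- `𝓛_T ∪ 𝓛_B` -/
def inLeft (K M N : ℕ) (p : V) : Prop := inLT K p ∨ inLB K M N p

/-- `𝓡_T ∪ 𝓡_B` -/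
def inRight (K L M N : ℕ) (p : V) : Prop := inRT K L M p ∨ inRB K L M N p

/-- The degree of a vertex `v` in a graph all of whose edges join lattice
neighbours. -/
def ndeg (A : V → V → Prop) (v : V) : ℕ :=
  (({(v.1 + 1, v.2), (v.1 - 1, v.2), (v.1, v.2 + 1), (v.1, v.2 - 1)} : Finset V).filter
    (fun w => A v w)).card

/-- A hexagonal fully packed loop configuration (HFPL) of size `(K,L,M,N)`. -/
structure HFPL (K L M N : ℕ) where
  Adj : V → V → Prop
  symm : ∀ v w, Adj v w → Adj w v
  valid : ∀ v w, Adj v w → inH K L M N v ∧ inH K L M N w ∧ latAdj v w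
  degLR : ∀ v, inLRset K L M N v → ndeg Adj v ≤ 1
  degTB : ∀ v, inTBset K L M N v → ndeg Adj v = 1
  degIn : ∀ v, inH K L M N v → ¬ inLRset K L M N v → ¬ inTBset K L M N v → ndeg Adj v = 2
  noLL : ∀ v w, inLeft K M N v → inLeft K M N w → v ≠ w → ¬ Relation.ReflTransGen Adj v w
  noRR : ∀ v w, inRight K L M N v → inRight K L M N w → v ≠ w → ¬ Relation.ReflTransGen Adj v w

/-- The boundary `(l_T,t,r_T;r_B,b,l_B)` of an HFPL. -/
def Boundary {K L M N : ℕ} (f : HFPL K L M N) (lT t rT rB b lB : Word) : Prop :=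
  (∀ i, i < K → (lT.getD i false = true ↔ ndeg f.Adj (LTv i) = 1)) ∧
  (∀ i, i < L → (t.getD i false = false ↔
     ((∃ w, (inLT K w ∨ inLB K M N w ∨ inBB K L M N w) ∧
        Relation.ReflTransGen f.Adj (TTv K i) w) ∨
      (∃ h, h < i ∧ Relation.ReflTransGen f.Adj (TTv K i) (TTv K h))))) ∧
  (∀ i, i < M → (rT.getD i false = false ↔ ndeg f.Adj (RTv K L i) = 1)) ∧
  (∀ i, i < N → (rB.getD i false = true ↔ ndeg f.Adj (RBv K L M N i) = 1)) ∧
  (∀ i, i < K + L - N → (b.getD i false = false ↔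
     ((∃ w, (inRT K L M w ∨ inRB K L M N w ∨ inTT K L w) ∧
        Relation.ReflTransGen f.Adj (BBv K M N i) w) ∨
      (∃ j, j < K + L - N ∧ i < j ∧
        Relation.ReflTransGen f.Adj (BBv K M N i) (BBv K M N j))))) ∧
  (∀ i, i < M + N - K → (lB.getD i false = false ↔ ndeg f.Adj (LBv i) = 1))

/-- `h^{r_B,b,l_B}_{l_T,t,r_T}`, the number of HFPLs with given boundary. -/
def hord (K L M N : ℕ) (lT t rT rB b lB : Word) : ℕ :=
  Nat.card {f : HFPL K L M N // Boundary f lT t rT rB b lB}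

/-- the undirected graph underlying a directed graph -/
def UAdj (E : V → V → Prop) : V → V → Prop := fun v w => E v w ∨ E w v

def outdeg (E : V → V → Prop) (v : V) : ℕ := ndeg E v
def indeg (E : V → V → Prop) (v : V) : ℕ := ndeg (fun x y => E y x) v

/-- An oriented HFPL of size `(K,L,M,N)`: an HFPL together with an orientation of
each edge such that every degree-2 vertex is incident to one incoming and one
outgoing edge, every edge attached to a vertex of `𝓛_T ∪ 𝓛_B` is outgoing and
every edge attached to a vertex of `𝓡_T ∪ 𝓡_B` is incoming. -/
structure OHFPL (K L M N : ℕ) where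
  E : V → V → Prop
  antisymm : ∀ v w, E v w → ¬ E w v
  valid : ∀ v w, E v w → inH K L M N v ∧ inH K L M N w ∧ latAdj v w
  degLR : ∀ v, inLRset K L M N v → ndeg (UAdj E) v ≤ 1
  degTB : ∀ v, inTBset K L M N v → ndeg (UAdj E) v = 1
  degIn : ∀ v, inH K L M N v → ¬ inLRset K L M N v → ¬ inTBset K L M N v →
    ndeg (UAdj E) v = 2
  noLL : ∀ v w, inLeft K M N v → inLeft K M N w → v ≠ w →
    ¬ Relation.ReflTransGen (UAdj E) v w
  noRR : ∀ v w, inRight K L M N v → inRight K L M N w → v ≠ w →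
    ¬ Relation.ReflTransGen (UAdj E) v w
  flow : ∀ v, ndeg (UAdj E) v = 2 → indeg E v = 1 ∧ outdeg E v = 1
  outL : ∀ v, inLeft K M N v → ∀ w, ¬ E w v
  inRt : ∀ v, inRight K L M N v → ∀ w, ¬ E v w

/-- The boundary `(l_T,t,r_T;r_B,b,l_B)` of an oriented HFPL. -/
def OBoundary {K L M N : ℕ} (f : OHFPL K L M N) (lT t rT rB b lB : Word) : Prop :=
  (∀ i, i < K → (lT.getD i false = true ↔ outdeg f.E (LTv i) = 1)) ∧
  (∀ i, i < L → (t.getD i false = false ↔ indeg f.E (TTv K i) = 1)) ∧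
  (∀ i, i < M → (rT.getD i false = false ↔ indeg f.E (RTv K L i) = 1)) ∧
  (∀ i, i < N → (rB.getD i false = true ↔ indeg f.E (RBv K L M N i) = 1)) ∧
  (∀ i, i < K + L - N → (b.getD i false = true ↔ indeg f.E (BBv K M N i) = 1)) ∧
  (∀ i, i < M + N - K → (lB.getD i false = false ↔ outdeg f.E (LBv i) = 1))

/-- `h⃗^{r_B,b,l_B}_{l_T,t,r_T}`, the number of oriented HFPLs with given boundary. -/
def hvec (K L M N : ℕ) (lT t rT rB b lB : Word) : ℕ :=
  Nat.card {f : OHFPL K L M N // OBoundary f lT t rT rB b lB}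

/-! Colour the vertices of `H^{K,L,M,N}` by the parity of `x + y`, so that every edge joins
the two colour classes. Off the boundary every vertex has in- and out-degree one; hence
counting the edges from even to odd vertices, and those from odd to even vertices, once by
their tails and once by their heads gives two balance equations between the boundary letters
and the numbers of even and odd inner vertices. These two numbers agree: summing `(-1)^(x+y)`
row by row shows that the even vertices outnumber the odd ones by `K - N`, and so do the
even boundary vertices (`K + L + M` of them, at the top) over the odd ones
(`(M + N - K) + (K + L - N) + N`, at the bottom). -/

lemma count_eq_sum_range_getD {α : Type*} [BEq α] [LawfulBEq α] (w : List α) (a d : α) :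
    w.count a = ∑ i ∈ Finset.range w.length, if w.getD i d = a then 1 else 0 := by
  induction w with
  | nil => simp
  | cons x w ih =>
    rw [List.length_cons, Finset.sum_range_succ', List.count_cons, ih]
    simp

lemma sum_range_eq_count {α : Type*} [BEq α] [LawfulBEq α] {w : List α} {a d : α} {n : ℕ}
    {g : ℕ → ℕ} (hn : w.length = n) (hle : ∀ i < n, g i ≤ 1)
    (hg : ∀ i < n, (w.getD i d = a ↔ g i = 1)) :
    ∑ i ∈ Finset.range n, g i = w.count a := by
  rw [count_eq_sum_range_getD w a d, hn]
  refine Finset.sum_congr rfl fun i hi => ?_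
  have hle := hle i (Finset.mem_range.mp hi)
  have hg := hg i (Finset.mem_range.mp hi)
  split_ifs with h
  · exact hg.mp h
  · have := mt hg.mpr h
    omega

lemma c0_add_c1 (w : Word) : c0 w + c1 w = w.length := List.count_false_add_count_true w

lemma latAdj_comm {v w : V} : latAdj v w ↔ latAdj w v := by
  unfold latAdj; omega

lemma latAdj.even_iff_not_even {v w : V} (h : latAdj v w) :
    Even (v.1 + v.2) ↔ ¬ Even (w.1 + w.2) := by
  unfold latAdj at h; simp only [Int.even_iff]; omega

lemma ndeg_eq_card_filter {A : V → V → Prop} {v : V} {t : Finset V}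
    (h : ∀ w, A v w → latAdj v w ∧ w ∈ t) : ndeg A v = (t.filter (A v)).card := by
  unfold ndeg
  congr 1
  ext w
  simp only [Finset.mem_filter, Finset.mem_insert, Finset.mem_singleton]
  refine ⟨fun ⟨_, hw⟩ => ⟨(h w hw).2, hw⟩, fun ⟨_, hw⟩ => ⟨?_, hw⟩⟩
  have := (h w hw).1
  unfold latAdj at this
  obtain ⟨x, y⟩ := v
  obtain ⟨x', y'⟩ := w
  simp only [Prod.mk.injEq] at this ⊢
  omega

section Orientation

variable {E : V → V → Prop}

lemma indeg_add_outdeg (hE : ∀ v w, E v w → ¬ E w v) (v : V) :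
    indeg E v + outdeg E v = ndeg (UAdj E) v := by
  unfold indeg outdeg ndeg UAdj
  rw [← Finset.card_union_of_disjoint, ← Finset.filter_or]
  · congr 1
    ext w
    simp only [Finset.mem_filter, or_comm]
  · exact Finset.disjoint_filter.mpr fun w _ hin hout => hE v w hout hin

lemma sum_outdeg_eq_sum_indeg (hE : ∀ v w, E v w → latAdj v w) {s t : Finset V}
    (hst : ∀ v w, E v w → (v ∈ s ↔ w ∈ t)) :
    ∑ v ∈ s, outdeg E v = ∑ w ∈ t, indeg E w := by
  have hout : ∀ v ∈ s, outdeg E v = (t.bipartiteAbove E v).card := fun v hv =>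
    ndeg_eq_card_filter fun w hw => ⟨hE v w hw, (hst v w hw).mp hv⟩
  have hin : ∀ w ∈ t, indeg E w = (s.bipartiteBelow E w).card := fun w hw =>
    ndeg_eq_card_filter fun v hv => ⟨latAdj_comm.mp (hE v w hv), (hst v w hv).mpr hw⟩
  rw [Finset.sum_congr rfl hout, Finset.sum_congr rfl hin,
    Finset.sum_card_bipartiteAbove_eq_sum_card_bipartiteBelow]

end Orientation

lemma sum_eq_sum_add_card_sdiff {α : Type*} [DecidableEq α] {s u : Finset α} {g : α → ℕ}
    (hus : u ⊆ s) (hg : ∀ v ∈ s \ u, g v = 1) :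
    ∑ v ∈ s, g v = ∑ v ∈ u, g v + (s \ u).card := by
  rw [← Finset.sum_sdiff hus, Finset.sum_congr rfl hg, Finset.card_eq_sum_ones, add_comm]

def vertexFinset (K L M N : ℕ) : Finset V :=
  (Finset.Icc ((-(K : ℤ), (K : ℤ) - M - N) : V) (2 * ((K : ℤ) + L + M + N), (K : ℤ) - 1)).filter
    (inH K L M N)

def evenVerts (K L M N : ℕ) : Finset V :=
  (vertexFinset K L M N).filter fun v => Even (v.1 + v.2)

def oddVerts (K L M N : ℕ) : Finset V :=
  (vertexFinset K L M N).filter fun v => ¬ Even (v.1 + v.2)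

section VertexCount

variable {K L M N : ℕ}

lemma mem_vertexFinset {v : V} : v ∈ vertexFinset K L M N ↔ inH K L M N v := by
  obtain ⟨x, y⟩ := v
  simp only [vertexFinset, Finset.mem_filter, Finset.mem_Icc, Prod.mk_le_mk,
    and_iff_right_iff_imp, inH]
  omega

lemma two_mul_sum_negOnePow_Icc (c a b : ℤ) (hab : a ≤ b + 1) :
    2 * ∑ x ∈ Finset.Icc a b, ((x + c).negOnePow : ℤ) =
      (a + c).negOnePow + (b + c).negOnePow := by
  induction b, (by omega : a - 1 ≤ b) using Int.leInduction with
  | base =>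
    rw [Finset.Icc_eq_empty (by omega), show a + c = a - 1 + c + 1 by ring, Int.negOnePow_succ]
    simp
  | succ b hb ih =>
    rw [← Finset.insert_Icc_right_eq_Icc_add_one (by omega),
      Finset.sum_insert (by simp), mul_add, ih (by omega),
      show b + 1 + c = b + c + 1 by ring, Int.negOnePow_succ]
    push_cast
    ring

lemma sum_Icc_ite_le (a b c : ℤ) (hac : a ≤ c) (hcb : c ≤ b + 1) :
    ∑ y ∈ Finset.Icc a b, (if c ≤ y then (1 : ℤ) else -1) = (b + 1 - c) - (c - a) := by
  rw [Finset.sum_ite, Finset.sum_const, Finset.sum_const,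
    show (Finset.Icc a b).filter (c ≤ ·) = Finset.Icc c b by ext; simp; omega,
    show (Finset.Icc a b).filter (¬ c ≤ ·) = Finset.Ico a c by ext; simp; omega,
    Int.card_Icc, Int.card_Ico]
  simp only [nsmul_eq_mul]
  omega

/-- Row `y` of `H^{K,L,M,N}` runs from `max y (-y-1)` to `min (2(K+L) - y) (y + 2(M+L) + 1)`;
the two ends have the colour of `y ≥ 0` and of `y ≥ K - M` respectively. -/
lemma two_mul_sum_negOnePow_row (hNKL : N ≤ K + L) {y : ℤ}
    (hy : y ∈ Finset.Icc ((K : ℤ) - M - N) ((K : ℤ) - 1)) :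
    2 * ∑ v ∈ (vertexFinset K L M N).filter (·.2 = y), ((v.1 + v.2).negOnePow : ℤ) =
      (if 0 ≤ y then 1 else -1) + (if (K : ℤ) - M ≤ y then 1 else -1) := by
  rw [Finset.mem_Icc] at hy
  have hrow : (vertexFinset K L M N).filter (·.2 = y) =
      (Finset.Icc (max y (-y - 1)) (min (2 * ((K : ℤ) + L) - y) (y + 2 * ((M : ℤ) + L) + 1))).map
        ⟨(·, y), Prod.mk_left_injective y⟩ := by
    ext ⟨x, y'⟩
    simp only [Finset.mem_filter, mem_vertexFinset, inH, Finset.mem_map, Finset.mem_Icc,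
      Function.Embedding.coeFn_mk, Prod.mk.injEq, max_le_iff, le_min_iff]
    constructor
    · rintro ⟨_, rfl⟩
      exact ⟨x, by omega, rfl, rfl⟩
    · rintro ⟨x', _, rfl, rfl⟩
      omega
  rw [hrow, Finset.sum_map]
  simp only [Function.Embedding.coeFn_mk]
  rw [two_mul_sum_negOnePow_Icc _ _ _ (by omega)]
  congr 1
  · split_ifs with h
    · rw [max_eq_left (by omega), Int.negOnePow_even _ ⟨y, rfl⟩, Units.val_one]
    · rw [max_eq_right (by omega), Int.negOnePow_odd _ ⟨-1, by ring⟩, Units.val_neg,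
        Units.val_one]
  · split_ifs with h
    · rw [min_eq_left (by omega), Int.negOnePow_even _ ⟨K + L, by ring⟩, Units.val_one]
    · rw [min_eq_right (by omega), Int.negOnePow_odd _ ⟨y + M + L, by ring⟩, Units.val_neg,
        Units.val_one]

lemma card_evenVerts_add_eq (hKMN : K ≤ M + N) (hNKL : N ≤ K + L) :
    (evenVerts K L M N).card + N = (oddVerts K L M N).card + K := by
  have hsplit : ∑ v ∈ vertexFinset K L M N, ((v.1 + v.2).negOnePow : ℤ) =
      (evenVerts K L M N).card - (oddVerts K L M N).card := by
    have heven : ∀ v ∈ evenVerts K L M N, ((v.1 + v.2).negOnePow : ℤ) = 1 := fun v hv => by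
      rw [Int.negOnePow_even _ (Finset.mem_filter.mp hv).2, Units.val_one]
    have hodd : ∀ v ∈ oddVerts K L M N, ((v.1 + v.2).negOnePow : ℤ) = -1 := fun v hv => by
      rw [Int.negOnePow_odd _ (Int.not_even_iff_odd.mp (Finset.mem_filter.mp hv).2),
        Units.val_neg, Units.val_one]
    rw [← Finset.sum_filter_add_sum_filter_not _ fun v : V => Even (v.1 + v.2)]
    change ∑ v ∈ evenVerts K L M N, _ + ∑ v ∈ oddVerts K L M N, _ = _
    rw [Finset.sum_congr rfl heven, Finset.sum_congr rfl hodd]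
    simp [sub_eq_add_neg]
  have hrows : 2 * ∑ v ∈ vertexFinset K L M N, ((v.1 + v.2).negOnePow : ℤ) =
      ∑ y ∈ Finset.Icc ((K : ℤ) - M - N) ((K : ℤ) - 1),
        ((if 0 ≤ y then 1 else -1) + (if (K : ℤ) - M ≤ y then 1 else -1)) := by
    rw [← Finset.sum_fiberwise_of_maps_to (g := Prod.snd)
        (t := Finset.Icc ((K : ℤ) - M - N) ((K : ℤ) - 1)) fun v hv => by
          have := mem_vertexFinset.mp hv
          simp only [inH] at this
          simp only [Finset.mem_Icc]
          omega,
      Finset.mul_sum]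
    exact Finset.sum_congr rfl fun y hy => two_mul_sum_negOnePow_row hNKL hy
  rw [Finset.sum_add_distrib, sum_Icc_ite_le _ _ _ (by omega) (by omega),
    sum_Icc_ite_le _ _ _ (by omega) (by omega), hsplit] at hrows
  omega

end VertexCount

/-- `𝓛_T ∪ 𝓣 ∪ 𝓡_T` -/
def evenBoundary (K L M : ℕ) : Finset V :=
  (Finset.range K).image LTv ∪ (Finset.range L).image (TTv K) ∪ (Finset.range M).image (RTv K L)

/-- `𝓛_B ∪ 𝓑 ∪ 𝓡_B` -/
def oddBoundary (K L M N : ℕ) : Finset V :=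
  (Finset.range (M + N - K)).image LBv ∪ (Finset.range (K + L - N)).image (BBv K M N) ∪
    (Finset.range N).image (RBv K L M N)

section Boundary

variable {K L M N : ℕ}

lemma sum_evenBoundary (g : V → ℕ) :
    ∑ v ∈ evenBoundary K L M, g v = ∑ i ∈ Finset.range K, g (LTv i) +
      ∑ i ∈ Finset.range L, g (TTv K i) + ∑ i ∈ Finset.range M, g (RTv K L i) := by
  unfold evenBoundary
  rw [Finset.sum_union, Finset.sum_union, Finset.sum_image, Finset.sum_image, Finset.sum_image]
  all_goals first
    | intro i _ j _ h; simp only [LTv, TTv, RTv, Prod.mk.injEq] at h; omega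
    | simp only [Finset.disjoint_left, Finset.mem_union, Finset.mem_image, Finset.mem_range]
      rintro _ (⟨i, _, rfl⟩ | ⟨i, _, rfl⟩) ⟨j, _, h⟩ <;>
        simp only [LTv, TTv, RTv, Prod.mk.injEq] at h <;> omega
    | simp only [Finset.disjoint_left, Finset.mem_image, Finset.mem_range]
      rintro _ ⟨i, _, rfl⟩ ⟨j, _, h⟩
      simp only [LTv, TTv, Prod.mk.injEq] at h
      omega

lemma sum_oddBoundary (hNKL : N ≤ K + L) (g : V → ℕ) :
    ∑ v ∈ oddBoundary K L M N, g v = ∑ i ∈ Finset.range (M + N - K), g (LBv i) +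
      ∑ i ∈ Finset.range (K + L - N), g (BBv K M N i) +
        ∑ i ∈ Finset.range N, g (RBv K L M N i) := by
  unfold oddBoundary
  rw [Finset.sum_union, Finset.sum_union, Finset.sum_image, Finset.sum_image, Finset.sum_image]
  all_goals first
    | intro i _ j _ h; simp only [LBv, BBv, RBv, Prod.mk.injEq] at h; omega
    | simp only [Finset.disjoint_left, Finset.mem_union, Finset.mem_image, Finset.mem_range]
      rintro _ (⟨i, _, rfl⟩ | ⟨i, _, rfl⟩) ⟨j, _, h⟩ <;>
        simp only [LBv, BBv, RBv, Prod.mk.injEq] at h <;> omega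
    | simp only [Finset.disjoint_left, Finset.mem_image, Finset.mem_range]
      rintro _ ⟨i, _, rfl⟩ ⟨j, _, h⟩
      simp only [LBv, BBv, Prod.mk.injEq] at h
      omega

lemma card_evenBoundary : (evenBoundary K L M).card = K + L + M := by
  rw [Finset.card_eq_sum_ones, sum_evenBoundary]
  simp

lemma card_oddBoundary (hNKL : N ≤ K + L) :
    (oddBoundary K L M N).card = (M + N - K) + (K + L - N) + N := by
  rw [Finset.card_eq_sum_ones, sum_oddBoundary hNKL]
  simp

lemma mem_evenBoundary_of_even {v : V} (hv : Even (v.1 + v.2))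
    (hs : inLRset K L M N v ∨ inTBset K L M N v) : v ∈ evenBoundary K L M := by
  simp only [evenBoundary, Finset.mem_union, Finset.mem_image, Finset.mem_range]
  rcases hs with (⟨i, hi, rfl⟩ | ⟨i, hi, rfl⟩ | ⟨i, hi, rfl⟩ | ⟨i, hi, rfl⟩) |
    (⟨i, hi, rfl⟩ | ⟨i, hi, rfl⟩)
  · exact Or.inl (Or.inl ⟨i, hi, rfl⟩)
  · simp only [LBv, Int.even_iff] at hv; omega
  · exact Or.inr ⟨i, hi, rfl⟩
  · simp only [RBv, Int.even_iff] at hv; omega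
  · exact Or.inl (Or.inr ⟨i, hi, rfl⟩)
  · simp only [BBv, Int.even_iff] at hv; omega

lemma mem_oddBoundary_of_not_even {v : V} (hv : ¬ Even (v.1 + v.2))
    (hs : inLRset K L M N v ∨ inTBset K L M N v) : v ∈ oddBoundary K L M N := by
  simp only [oddBoundary, Finset.mem_union, Finset.mem_image, Finset.mem_range]
  rcases hs with (⟨i, hi, rfl⟩ | ⟨i, hi, rfl⟩ | ⟨i, hi, rfl⟩ | ⟨i, hi, rfl⟩) |
    (⟨i, hi, rfl⟩ | ⟨i, hi, rfl⟩)
  · simp only [LTv, Int.even_iff] at hv; omega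
  · exact Or.inl (Or.inl ⟨i, hi, rfl⟩)
  · simp only [RTv, Int.even_iff] at hv; omega
  · exact Or.inr ⟨i, hi, rfl⟩
  · simp only [TTv, Int.even_iff] at hv; omega
  · exact Or.inl (Or.inr ⟨i, hi, rfl⟩)

end Boundary

namespace OHFPL

variable {K L M N : ℕ} (f : OHFPL K L M N)

lemma inH_of_ndeg_eq_one {v : V} (h : ndeg (UAdj f.E) v = 1) : inH K L M N v := by
  by_contra hv
  have : ndeg (UAdj f.E) v = 0 := by
    refine Finset.card_eq_zero.mpr (Finset.filter_eq_empty_iff.mpr fun w _ hw => hv ?_)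
    rcases hw with hw | hw
    exacts [(f.valid _ _ hw).1, (f.valid _ _ hw).2.1]
  omega

lemma evenBoundary_subset (f : OHFPL K L M N) (hKMN : K ≤ M + N) : evenBoundary K L M ⊆ evenVerts K L M N := by
  intro v hv
  simp only [evenBoundary, Finset.mem_union, Finset.mem_image, Finset.mem_range] at hv
  simp only [evenVerts, Finset.mem_filter, mem_vertexFinset]
  rcases hv with (⟨i, hi, rfl⟩ | ⟨i, hi, rfl⟩) | ⟨i, hi, rfl⟩
  · simp only [inH, LTv, Int.even_iff]; omega
  · refine ⟨f.inH_of_ndeg_eq_one (f.degTB _ (Or.inl ⟨i, hi, rfl⟩)), ?_⟩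
    simp only [TTv, Int.even_iff]; omega
  · simp only [inH, RTv, Int.even_iff]; omega

lemma oddBoundary_subset (f : OHFPL K L M N) (hNKL : N ≤ K + L) : oddBoundary K L M N ⊆ oddVerts K L M N := by
  intro v hv
  simp only [oddBoundary, Finset.mem_union, Finset.mem_image, Finset.mem_range] at hv
  simp only [oddVerts, Finset.mem_filter, mem_vertexFinset]
  rcases hv with (⟨i, hi, rfl⟩ | ⟨i, hi, rfl⟩) | ⟨i, hi, rfl⟩
  · simp only [inH, LBv, Int.even_iff]; omega
  · refine ⟨f.inH_of_ndeg_eq_one (f.degTB _ (Or.inr ⟨i, hi, rfl⟩)), ?_⟩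
    simp only [BBv, Int.even_iff]; omega
  · simp only [inH, RBv, Int.even_iff]; omega

lemma indeg_eq_one_and_outdeg_eq_one {v : V} (hv : inH K L M N v)
    (hs : ¬ (inLRset K L M N v ∨ inTBset K L M N v)) : indeg f.E v = 1 ∧ outdeg f.E v = 1 :=
  f.flow v (f.degIn v hv (fun h => hs (Or.inl h)) fun h => hs (Or.inr h))

lemma sum_evenVerts {g : V → ℕ} (hKMN : K ≤ M + N)
    (hg : ∀ v, indeg f.E v = 1 ∧ outdeg f.E v = 1 → g v = 1) :
    ∑ v ∈ evenVerts K L M N, g v =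
      ∑ v ∈ evenBoundary K L M, g v + (evenVerts K L M N \ evenBoundary K L M).card := by
  refine sum_eq_sum_add_card_sdiff (f.evenBoundary_subset hKMN) fun v hv => hg v ?_
  obtain ⟨hv, hb⟩ := Finset.mem_sdiff.mp hv
  obtain ⟨hv, heven⟩ := Finset.mem_filter.mp hv
  exact f.indeg_eq_one_and_outdeg_eq_one (mem_vertexFinset.mp hv)
    (mt (mem_evenBoundary_of_even heven) hb)

lemma sum_oddVerts {g : V → ℕ} (hNKL : N ≤ K + L)
    (hg : ∀ v, indeg f.E v = 1 ∧ outdeg f.E v = 1 → g v = 1) :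
    ∑ v ∈ oddVerts K L M N, g v =
      ∑ v ∈ oddBoundary K L M N, g v + (oddVerts K L M N \ oddBoundary K L M N).card := by
  refine sum_eq_sum_add_card_sdiff (f.oddBoundary_subset hNKL) fun v hv => hg v ?_
  obtain ⟨hv, hb⟩ := Finset.mem_sdiff.mp hv
  obtain ⟨hv, hodd⟩ := Finset.mem_filter.mp hv
  exact f.indeg_eq_one_and_outdeg_eq_one (mem_vertexFinset.mp hv)
    (mt (mem_oddBoundary_of_not_even hodd) hb)

lemma sum_outdeg_evenVerts_eq_sum_indeg_oddVerts :
    ∑ v ∈ evenVerts K L M N, outdeg f.E v = ∑ v ∈ oddVerts K L M N, indeg f.E v := by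
  refine sum_outdeg_eq_sum_indeg (fun v w h => (f.valid v w h).2.2) fun v w h => ?_
  obtain ⟨hv, hw, hvw⟩ := f.valid v w h
  simp only [evenVerts, oddVerts, Finset.mem_filter, mem_vertexFinset, hv, hw, true_and]
  exact hvw.even_iff_not_even

lemma sum_outdeg_oddVerts_eq_sum_indeg_evenVerts :
    ∑ v ∈ oddVerts K L M N, outdeg f.E v = ∑ v ∈ evenVerts K L M N, indeg f.E v := by
  refine sum_outdeg_eq_sum_indeg (fun v w h => (f.valid v w h).2.2) fun v w h => ?_
  obtain ⟨hv, hw, hvw⟩ := f.valid v w h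
  simp only [evenVerts, oddVerts, Finset.mem_filter, mem_vertexFinset, hv, hw, true_and]
  exact not_iff_comm.mp hvw.even_iff_not_even.symm

lemma indeg_eq_zero {v : V} (hv : inLeft K M N v) : indeg f.E v = 0 := by
  unfold indeg ndeg
  exact Finset.card_eq_zero.mpr (Finset.filter_eq_empty_iff.mpr fun w _ => f.outL v hv w)

lemma outdeg_eq_zero {v : V} (hv : inRight K L M N v) : outdeg f.E v = 0 := by
  unfold outdeg ndeg
  exact Finset.card_eq_zero.mpr (Finset.filter_eq_empty_iff.mpr fun w _ => f.inRt v hv w)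

lemma indeg_le_one {v : V} (hv : inLRset K L M N v ∨ inTBset K L M N v) : indeg f.E v ≤ 1 := by
  have := indeg_add_outdeg f.antisymm v
  rcases hv with hv | hv
  · have := f.degLR v hv; omega
  · have := f.degTB v hv; omega

lemma outdeg_le_one {v : V} (hv : inLRset K L M N v ∨ inTBset K L M N v) :
    outdeg f.E v ≤ 1 := by
  have := indeg_add_outdeg f.antisymm v
  rcases hv with hv | hv
  · have := f.degLR v hv; omega
  · have := f.degTB v hv; omega

lemma outdeg_eq_one_iff {v : V} (hv : inTBset K L M N v) :
    outdeg f.E v = 1 ↔ ¬ indeg f.E v = 1 := by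
  have := indeg_add_outdeg f.antisymm v
  have := f.degTB v hv
  omega

variable {f} {lT t rT rB b lB : Word}

lemma sum_outdeg_evenBoundary (hbd : OBoundary f lT t rT rB b lB) (hlT : lT.length = K) (ht : t.length = L) :
    ∑ v ∈ evenBoundary K L M, outdeg f.E v = c1 lT + c1 t := by
  rw [sum_evenBoundary,
    sum_range_eq_count hlT (fun i hi => f.outdeg_le_one (Or.inl (Or.inl ⟨i, hi, rfl⟩))) hbd.1,
    sum_range_eq_count (a := true) (d := false) ht
      (fun i hi => f.outdeg_le_one (Or.inr (Or.inl ⟨i, hi, rfl⟩)))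
      fun i hi => by
        rw [f.outdeg_eq_one_iff (Or.inl ⟨i, hi, rfl⟩), ← hbd.2.1 i hi, Bool.not_eq_false],
    Finset.sum_eq_zero fun i hi =>
      f.outdeg_eq_zero (Or.inl ⟨i, Finset.mem_range.mp hi, rfl⟩)]
  rfl

lemma sum_indeg_evenBoundary (hbd : OBoundary f lT t rT rB b lB) (ht : t.length = L) (hrT : rT.length = M) :
    ∑ v ∈ evenBoundary K L M, indeg f.E v = c0 t + c0 rT := by
  rw [sum_evenBoundary,
    Finset.sum_eq_zero fun i hi => f.indeg_eq_zero (Or.inl ⟨i, Finset.mem_range.mp hi, rfl⟩),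
    sum_range_eq_count ht (fun i hi => f.indeg_le_one (Or.inr (Or.inl ⟨i, hi, rfl⟩))) hbd.2.1,
    sum_range_eq_count hrT (fun i hi => f.indeg_le_one (Or.inl (Or.inr (Or.inr (Or.inl
      ⟨i, hi, rfl⟩))))) hbd.2.2.1]
  simp only [c0, zero_add]

lemma sum_outdeg_oddBoundary (hbd : OBoundary f lT t rT rB b lB) (hNKL : N ≤ K + L) (hb : b.length = K + L - N)
    (hlB : lB.length = M + N - K) :
    ∑ v ∈ oddBoundary K L M N, outdeg f.E v = c0 lB + c0 b := by
  rw [sum_oddBoundary hNKL,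
    sum_range_eq_count hlB (fun i hi => f.outdeg_le_one (Or.inl (Or.inr (Or.inl ⟨i, hi, rfl⟩))))
      hbd.2.2.2.2.2,
    sum_range_eq_count (a := false) (d := false) hb
      (fun i hi => f.outdeg_le_one (Or.inr (Or.inr ⟨i, hi, rfl⟩)))
      fun i hi => by
        rw [f.outdeg_eq_one_iff (Or.inr ⟨i, hi, rfl⟩), ← hbd.2.2.2.2.1 i hi, Bool.not_eq_true],
    Finset.sum_eq_zero fun i hi =>
      f.outdeg_eq_zero (Or.inr ⟨i, Finset.mem_range.mp hi, rfl⟩)]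
  rfl

lemma sum_indeg_oddBoundary (hbd : OBoundary f lT t rT rB b lB) (hNKL : N ≤ K + L) (hb : b.length = K + L - N)
    (hrB : rB.length = N) :
    ∑ v ∈ oddBoundary K L M N, indeg f.E v = c1 b + c1 rB := by
  rw [sum_oddBoundary hNKL,
    Finset.sum_eq_zero fun i hi => f.indeg_eq_zero (Or.inr ⟨i, Finset.mem_range.mp hi, rfl⟩),
    sum_range_eq_count hb (fun i hi => f.indeg_le_one (Or.inr (Or.inr ⟨i, hi, rfl⟩)))
      hbd.2.2.2.2.1,
    sum_range_eq_count hrB (fun i hi => f.indeg_le_one (Or.inl (Or.inr (Or.inr (Or.inr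
      ⟨i, hi, rfl⟩))))) hbd.2.2.2.1]
  simp only [c1, zero_add]

end OHFPL

/-- If there exists an oriented HFPL of size `(K,L,M,N)` with
boundary `(l_T,t,r_T;r_B,b,l_B)`, then `|l_T|₀ + |t|₀ = |r_B|₀ + |b|₀` and
`|t|₁ + |r_T|₁ = |b|₁ + |l_B|₁`. -/
theorem oriented_HFPL_boundary_counts
    (K L M N : ℕ) (hKMN : K ≤ M + N) (hNKL : N ≤ K + L)
    (lT t rT rB b lB : Word)
    (hlT : lT.length = K) (ht : t.length = L) (hrT : rT.length = M)
    (hrB : rB.length = N) (hb : b.length = K + L - N) (hlB : lB.length = M + N - K)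
    (hpos : 0 < hvec K L M N lT t rT rB b lB) :
    c0 lT + c0 t = c0 rB + c0 b ∧ c1 t + c1 rT = c1 b + c1 lB := by
  obtain ⟨⟨⟨f, hbd⟩⟩, -⟩ := Nat.card_ne_zero.mp hpos.ne'
  have hEO := f.sum_outdeg_evenVerts_eq_sum_indeg_oddVerts
  rw [f.sum_evenVerts hKMN fun _ h => h.2, f.sum_outdeg_evenBoundary hbd hlT ht,
    f.sum_oddVerts hNKL fun _ h => h.1, f.sum_indeg_oddBoundary hbd hNKL hb hrB] at hEO
  have hOE := f.sum_outdeg_oddVerts_eq_sum_indeg_evenVerts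
  rw [f.sum_oddVerts hNKL fun _ h => h.2, f.sum_outdeg_oddBoundary hbd hNKL hb hlB,
    f.sum_evenVerts hKMN fun _ h => h.1, f.sum_indeg_evenBoundary hbd ht hrT] at hOE
  have hcard := card_evenVerts_add_eq hKMN hNKL
  rw [← Finset.card_sdiff_add_card_eq_card (f.evenBoundary_subset hKMN),
    ← Finset.card_sdiff_add_card_eq_card (f.oddBoundary_subset hNKL),
    card_evenBoundary, card_oddBoundary hNKL] at hcard
  have := c0_add_c1 lT; have := c0_add_c1 t; have := c0_add_c1 rT
  have := c0_add_c1 rB; have := c0_add_c1 b; have := c0_add_c1 lB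
  omega

end
end HFPLpaper2014
end

section
/- For every positive integer n, the matrices M_b(n) and M_t(n) are invertible (over the field ℚ(q) of rational functions). -/
open scoped Classical

namespace HFPLpaper2014

noncomputable section

namespace Constr

variable {n : ℕ}

/-- the balance function: +1 for each 0 (false), -1 for each 1 (true) -/
def B (w : Fin n → Bool) : ℕ → ℤ
  | 0 => 0
  | m + 1 => B w m + (if h : m < n then (if w ⟨m, h⟩ then -1 else 1) else 0)

variable {w : Fin n → Bool}

lemma B_step {m : ℕ} (h : m < n) : B w (m + 1) = B w m + (if w ⟨m, h⟩ then -1 else 1) := by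
  simp [B, h]

lemma B_step_abs {m : ℕ} (h : m < n) :
    B w (m + 1) = B w m + 1 ∨ B w (m + 1) = B w m - 1 := by
  rw [B_step h]
  by_cases hw : w ⟨m, h⟩
  · simp [hw]; ring
  · simp [hw]

lemma B_step_false {m : ℕ} (h : m < n) (hw : w ⟨m, h⟩ = false) :
    B w (m + 1) = B w m + 1 := by rw [B_step h, hw]; simp

lemma B_step_true {m : ℕ} (h : m < n) (hw : w ⟨m, h⟩ = true) :
    B w (m + 1) = B w m - 1 := by rw [B_step h, hw]; simp; ring

lemma w_false_of_up {m : ℕ} (h : m < n) (hB : B w m < B w (m + 1)) : w ⟨m, h⟩ = false := by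
  by_contra hw
  rw [B_step_true h (by simpa using hw)] at hB; omega

lemma w_true_of_down {m : ℕ} (h : m < n) (hB : B w (m + 1) < B w m) : w ⟨m, h⟩ = true := by
  by_contra hw
  rw [B_step_false h (by simpa using hw)] at hB; omega

/-- first return: if B exceeds c at a and is ≤ c at b, there is a first crossing, with value c -/
lemma first_eq {a b : ℕ} {c : ℤ} (hb : b ≤ n) (ha : c < B w a) (hbv : B w b ≤ c)
    (hab : a ≤ b) :
    ∃ m, a < m ∧ m ≤ b ∧ B w m = c ∧ ∀ k, a ≤ k → k < m → c < B w k := by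
  have hab' : a < b := lt_of_le_of_ne hab (by rintro rfl; omega)
  have hex : ∃ m, a < m ∧ m ≤ b ∧ B w m ≤ c := ⟨b, hab', le_rfl, hbv⟩
  classical
  obtain ⟨h1, h2, h3⟩ := Nat.find_spec hex
  set m := Nat.find hex with hm
  have hmin : ∀ k, a ≤ k → k < m → c < B w k := by
    intro k hk hkm
    rcases eq_or_lt_of_le hk with rfl | hk'
    · exact ha
    · have := Nat.find_min hex hkm
      push_neg at this
      exact this hk' (le_trans (le_of_lt hkm) h2)
  refine ⟨m, h1, h2, ?_, hmin⟩
  have hprev : c < B w (m - 1) := hmin _ (by omega) (by omega)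
  have hlt : m - 1 < n := by omega
  have hstep := B_step_abs (w := w) hlt
  have hmm : m - 1 + 1 = m := by omega
  rw [hmm] at hstep
  omega

/-- last departure: if B is ≤ c at a and exceeds c at b, there is a last time it equals c -/
lemma last_eq {a b : ℕ} {c : ℤ} (hb : b ≤ n) (ha : B w a ≤ c) (hbv : c < B w b)
    (hab : a ≤ b) :
    ∃ m, a ≤ m ∧ m < b ∧ B w m = c ∧ ∀ k, m < k → k ≤ b → c < B w k := by
  classical
  set m := Nat.findGreatest (fun m => a ≤ m ∧ B w m ≤ c) b with hm
  have hspec : a ≤ m ∧ B w m ≤ c := by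
    rw [hm]
    exact Nat.findGreatest_spec (P := fun m => a ≤ m ∧ B w m ≤ c) (m := a) hab ⟨le_rfl, ha⟩
  have hml : m ≤ b := Nat.findGreatest_le b
  have hmb : m < b := lt_of_le_of_ne hml (by intro he; rw [he] at hspec; exact absurd hspec.2 (by omega))
  have hgr : ∀ k, m < k → k ≤ b → c < B w k := by
    intro k hk1 hk2
    have := Nat.findGreatest_is_greatest (n := b) (P := fun m => a ≤ m ∧ B w m ≤ c) (by rw [← hm]; exact hk1) hk2
    by_contra hc
    push_neg at hc
    exact this ⟨le_trans hspec.1 (le_of_lt hk1), hc⟩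
  refine ⟨m, hspec.1, hmb, ?_, hgr⟩
  have hnext : c < B w (m + 1) := hgr _ (by omega) (by omega)
  have hlt : m < n := by omega
  have hstep := B_step_abs (w := w) hlt
  have := hspec.2
  omega

/-- the matching relation: `a` is an opening matched with closing `b` -/
def Rel (w : Fin n → Bool) (a b : ℕ) : Prop :=
  a < b ∧ b < n ∧ B w (b + 1) = B w a ∧ ∀ k, a < k → k ≤ b → B w a < B w k

lemma Rel.up {a b : ℕ} (h : Rel w a b) : B w (a + 1) = B w a + 1 := by
  obtain ⟨hab, hbn, hret, hmin⟩ := h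
  have h1 : B w a < B w (a + 1) := hmin (a + 1) (by omega) (by omega)
  have hstep := B_step_abs (w := w) (show a < n by omega)
  omega

lemma Rel.down {a b : ℕ} (h : Rel w a b) : B w (b + 1) = B w b - 1 := by
  have hup := h.up
  obtain ⟨hab, hbn, hret, hmin⟩ := h
  have h1 : B w a < B w b := by
    rcases Nat.lt_or_ge (a + 1) b with hlt | hge
    · exact hmin b (by omega) le_rfl
    · have hb1 : b = a + 1 := by omega
      rw [hb1, hup]; omega
  have hstep := B_step_abs (w := w) hbn
  omega

lemma Rel.w_false {a b : ℕ} (h : Rel w a b) (ha : a < n) : w ⟨a, ha⟩ = false :=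
  w_false_of_up ha (by rw [h.up]; omega)

lemma Rel.w_true {a b : ℕ} (h : Rel w a b) : w ⟨b, h.2.1⟩ = true := by
  have hd := h.down
  have := h.2.2.2 b h.1 le_rfl
  exact w_true_of_down h.2.1 (by omega)

/-- uniqueness of the closing for fixed opening -/
lemma Rel.unique_right {a b b' : ℕ} (h : Rel w a b) (h' : Rel w a b') : b = b' := by
  by_contra hne
  wlog hbb : b < b' generalizing b b'
  · exact this h' h (Ne.symm hne) (by omega)
  have hret := h.2.2.1
  have h1 : B w a < B w (b + 1) := h'.2.2.2 (b + 1) (by have := h.1; omega) (by omega)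
  omega

/-- uniqueness of the opening for fixed closing -/
lemma Rel.unique_left {a a' b : ℕ} (h : Rel w a b) (h' : Rel w a' b) : a = a' := by
  by_contra hne
  wlog haa : a < a' generalizing a a'
  · exact this h' h (Ne.symm hne) (by omega)
  have h1 : B w a < B w a' := h.2.2.2 a' haa (le_of_lt h'.1)
  have h2 := h.2.2.1
  have h3 := h'.2.2.1
  omega

/-- an opening cannot also be a closing -/
lemma Rel.not_close {a b c : ℕ} (h : Rel w a b) (h' : Rel w c a) : False := by
  have h1 := h.up
  have h2 := h'.down
  omega

end Constr

open Constr

variable {n : ℕ}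

/-- the role of point `i` in the pattern `w⁻¹(w)` -/
def roleOf (w : Fin n → Bool) (i : Fin n) : PRole n :=
  if h : ∃ j : Fin n, Rel w i j then PRole.matched h.choose
  else if h2 : ∃ j : Fin n, Rel w j i then PRole.matched h2.choose
  else if w i then PRole.left else PRole.right

lemma roleOf_matched_iff {w : Fin n → Bool} {i j : Fin n} :
    roleOf w i = PRole.matched j ↔ Rel w i j ∨ Rel w j i := by
  constructor
  · intro h
    by_cases h1 : ∃ j : Fin n, Rel w i j
    · rw [roleOf, dif_pos h1] at h
      exact Or.inl (by cases h; exact h1.choose_spec)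
    · by_cases h2 : ∃ j : Fin n, Rel w j i
      · rw [roleOf, dif_neg h1, dif_pos h2] at h
        exact Or.inr (by cases h; exact h2.choose_spec)
      · rw [roleOf, dif_neg h1, dif_neg h2] at h
        exact absurd h (by split_ifs <;> simp)
  · rintro (hr | hr)
    · unfold roleOf
      have h1 : ∃ j : Fin n, Rel w i j := ⟨j, hr⟩
      rw [dif_pos h1]
      congr 1
      have hs := h1.choose_spec
      have := Rel.unique_right hr hs
      exact Fin.val_injective this.symm
    · unfold roleOf
      have h1 : ¬ ∃ j : Fin n, Rel w i j := by
        rintro ⟨c, hc⟩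
        exact Rel.not_close hc hr
      rw [dif_neg h1]
      have h2 : ∃ j : Fin n, Rel w j i := ⟨j, hr⟩
      rw [dif_pos h2]
      congr 1
      have hs := h2.choose_spec
      have := Rel.unique_left hr hs
      exact Fin.val_injective this.symm

lemma roleOf_left_iff {w : Fin n → Bool} {i : Fin n} :
    roleOf w i = PRole.left ↔
      (¬ ∃ j : Fin n, Rel w i j) ∧ (¬ ∃ j : Fin n, Rel w j i) ∧ w i = true := by
  unfold roleOf
  split_ifs with h1 h2 h3 <;> try simp_all

lemma roleOf_right_iff {w : Fin n → Bool} {i : Fin n} :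
    roleOf w i = PRole.right ↔
      (¬ ∃ j : Fin n, Rel w i j) ∧ (¬ ∃ j : Fin n, Rel w j i) ∧ w i = false := by
  unfold roleOf
  split_ifs with h1 h2 h3 <;> simp_all


section Existence

variable {n : ℕ} {w : Fin n → Bool}

open Constr

/-- an opening whose level is later weakly undercut is matched -/
lemma exists_close {a : ℕ} (ha : a < n) (hw : w ⟨a, ha⟩ = false) {m : ℕ}
    (hm : a < m) (hmn : m ≤ n) (hB : B w m ≤ B w a) : ∃ b, Rel w a b := by
  obtain ⟨m', h1, h2, h3, h4⟩ :=
    first_eq (a := a + 1) (b := m) (c := B w a) hmn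
      (by rw [B_step_false ha hw]; omega) hB (by omega)
  refine ⟨m' - 1, by omega, by omega, ?_, ?_⟩
  · have : m' - 1 + 1 = m' := by omega
    rw [this, h3]
  · intro k hk1 hk2
    rcases Nat.eq_or_lt_of_le (Nat.succ_le_of_lt hk1) with heq | hlt
    · have : k = a + 1 := by omega
      rw [this, B_step_false ha hw]; omega
    · exact h4 k (by omega) (by omega)

/-- a closing whose level weakly exceeds an earlier level is matched -/
lemma exists_open {b : ℕ} (hb : b < n) (hw : w ⟨b, hb⟩ = true) {a : ℕ}
    (hab : a ≤ b) (hB : B w a ≤ B w (b + 1)) : ∃ a', a ≤ a' ∧ Rel w a' b := by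
  obtain ⟨m, h1, h2, h3, h4⟩ :=
    last_eq (a := a) (b := b) (c := B w (b + 1)) (by omega) hB
      (by rw [B_step_true hb hw]; omega) hab
  exact ⟨m, h1, h2, hb, h3.symm, fun k hk1 hk2 => by rw [h3]; exact h4 k hk1 hk2⟩

/-- an unmatched opening is never weakly undercut later -/
lemma unmatched_open {a : Fin n} (hw : w a = false) (h : ¬ ∃ b : Fin n, Rel w a b)
    {m : ℕ} (hm : (a : ℕ) < m) (hmn : m ≤ n) : B w a < B w m := by
  by_contra hc
  push_neg at hc
  obtain ⟨b, hb⟩ := exists_close a.2 (by simpa using hw) hm hmn hc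
  exact h ⟨⟨b, hb.2.1⟩, hb⟩

def elpOf (w : Fin n → Bool) : ELP n where
  role := roleOf w
  matched_symm := by
    intro i j h
    rw [roleOf_matched_iff] at h ⊢
    exact h.symm
  matched_ne := by
    intro i j h
    rcases roleOf_matched_iff.1 h with hr | hr
    · exact fun he => by rw [he] at hr; exact absurd hr.1 (lt_irrefl _)
    · exact fun he => by rw [he] at hr; exact absurd hr.1 (lt_irrefl _)
  left_lt_right := by
    intro i j hi hj
    obtain ⟨hi1, hi2, hi3⟩ := roleOf_left_iff.1 hi
    obtain ⟨hj1, hj2, hj3⟩ := roleOf_right_iff.1 hj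
    by_contra hc
    push_neg at hc
    have hji : (j : ℕ) < i := by
      rcases lt_or_eq_of_le hc with h | h
      · exact h
      · rw [← h] at hi3; rw [hi3] at hj3; cases hj3
    have hBi : B w j < B w ((i : ℕ) + 1) :=
      unmatched_open hj3 hj1 (by omega) (by have := i.2; omega)
    have hBj : B w ((j : ℕ) + 1) = B w j + 1 := B_step_false j.2 (by simpa using hj3)
    obtain ⟨a', ha1, ha2⟩ :=
      exists_open i.2 (by simpa using hi3) (a := (j : ℕ) + 1) (by omega) (by omega)
    exact hi2 ⟨⟨a', by have := ha2.1; have := i.2; omega⟩, ha2⟩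
  noncross := by
    intro i j k l hij hjk hkl hik hjl
    have hik' : Rel w i k := by
      rcases roleOf_matched_iff.1 hik with h | h
      · exact h
      · exact absurd h.1 (by have : (i:ℕ) < k := lt_trans hij hjk; omega)
    have hjl' : Rel w j l := by
      rcases roleOf_matched_iff.1 hjl with h | h
      · exact h
      · exact absurd h.1 (by have : (j:ℕ) < l := lt_trans hjk hkl; omega)
    have h1 : B w j < B w ((k : ℕ) + 1) := hjl'.2.2.2 _
      (by have : (j : ℕ) < k := hjk; omega) (by have : (k : ℕ) < l := hkl; omega)
    have h2 : B w ((k : ℕ) + 1) = B w i := hik'.2.2.1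
    have h3 : B w i < B w j := hik'.2.2.2 _ (by exact_mod_cast hij) (le_of_lt (by exact_mod_cast hjk))
    omega
  nounder := by
    intro i j k hij hik hkj
    have hij' : Rel w i j := by
      rcases roleOf_matched_iff.1 hij with h | h
      · exact h
      · exact absurd h.1 (by have : (i:ℕ) < j := lt_trans hik hkj; omega)
    have hikn : (i : ℕ) < k := hik
    have hkjn : (k : ℕ) < j := hkj
    have hjn : (j : ℕ) < n := hij'.2.1
    cases hw : w k with
    | false =>
      have hBk : B w i < B w k := hij'.2.2.2 _ hikn (by omega)
      have hBj1 : B w ((j : ℕ) + 1) = B w i := hij'.2.2.1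
      obtain ⟨b, hb⟩ := exists_close (m := (j : ℕ) + 1) k.2 (by simpa using hw)
        (by omega) (by omega) (by omega)
      exact ⟨⟨b, hb.2.1⟩, roleOf_matched_iff.2 (Or.inl hb)⟩
    | true =>
      have hBk1 : B w i < B w ((k : ℕ) + 1) := hij'.2.2.2 _ (by omega) (by omega)
      have hBi1 : B w ((i : ℕ) + 1) = B w i + 1 := hij'.up
      obtain ⟨a', ha1, ha2⟩ := exists_open (a := (i : ℕ) + 1) k.2 (by simpa using hw)
        (by omega) (by omega)
      exact ⟨⟨a', by have := ha2.1; have := k.2; omega⟩,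
        roleOf_matched_iff.2 (Or.inr ha2)⟩

lemma wmapF_elpOf (w : Fin n → Bool) : wmapF (elpOf w) = w := by
  funext i
  show letterOf (elpOf w) i = w i
  unfold letterOf
  cases hr : (elpOf w).role i with
  | left =>
    obtain ⟨_, _, h3⟩ := roleOf_left_iff.1 hr
    simp [h3]
  | right =>
    obtain ⟨_, _, h3⟩ := roleOf_right_iff.1 hr
    simp [h3]
  | matched j =>
    rcases roleOf_matched_iff.1 hr with h | h
    · have hji : ¬ (j < i) := by
        have := h.1
        intro hc
        have : (j : ℕ) < i := hc
        omega
      have hwi : w i = false := by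
        have := h.w_false (by exact i.2)
        simpa using this
      simp [hji, hwi]
    · have hji : j < i := by
        have : (j : ℕ) < i := h.1
        exact this
      have hwi : w i = true := by
        have := h.w_true
        simpa using this
      simp [hji, hwi]

def delpOf (w : Fin n → Bool) : DELP n where
  toELP := elpOf w
  isSource := fun i => ! (w i)
  pair_mixed := by
    intro i j h
    have hwj : w j = (! w i) := by
      have hsym := (elpOf w).matched_symm i j h
      rcases roleOf_matched_iff.1 h with hr | hr
      · have h1 : w i = false := by simpa using hr.w_false (by exact i.2)
        have h2 : w j = true := by simpa using hr.w_true
        rw [h1, h2]; rfl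
      · have h1 : w i = true := by simpa using hr.w_true
        have h2 : w j = false := by simpa using hr.w_false (by exact j.2)
        rw [h1, h2]; rfl
    show (! w i) = ! (! w j)
    rw [hwj]
    simp

lemma wmapF_delpOf (w : Fin n → Bool) : wmapF (delpOf w).toELP = w := wmapF_elpOf w

lemma sswF_delpOf (w : Fin n → Bool) : sswF (delpOf w) = w := by
  funext i
  simp [sswF, delpOf]

end Existence

section Weights

variable {n : ℕ}

/-- boolean to integer -/
def bz (b : Bool) : ℤ := if b then 1 else 0

@[simp] lemma bz_true : bz true = 1 := rfl
@[simp] lemma bz_false : bz false = 0 := rfl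

lemma sum_pos_aux (σ : Fin n → Fin n) (hσ : Function.Involutive σ) (t : Fin n → ℤ)
    (h0 : ∀ i, 0 ≤ t i + t (σ i)) (i0 : Fin n) (h1 : 1 ≤ t i0 + t (σ i0)) :
    0 < ∑ i, t i := by
  have hs : ∑ i, t (σ i) = ∑ i, t i :=
    Fintype.sum_equiv hσ.toPerm (fun i => t (σ i)) t (fun x => rfl)
  have h2 : 1 ≤ ∑ i, (t i + t (σ i)) :=
    le_trans h1 (Finset.single_le_sum (fun i _ => h0 i) (Finset.mem_univ i0))
  rw [Finset.sum_add_distrib, hs] at h2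
  omega

/-- the partner map of an extended link pattern -/
def partner (π : ELP n) (i : Fin n) : Fin n :=
  if h : ∃ j, π.role i = PRole.matched j then h.choose else i

lemma partner_matched {π : ELP n} {i j : Fin n} (h : π.role i = PRole.matched j) :
    partner π i = j := by
  have he : ∃ j, π.role i = PRole.matched j := ⟨j, h⟩
  rw [partner, dif_pos he]
  have h2 := he.choose_spec.symm.trans h
  injection h2

lemma partner_other {π : ELP n} {i : Fin n} (h : ∀ j, π.role i ≠ PRole.matched j) :
    partner π i = i := by
  rw [partner, dif_neg]
  rintro ⟨j, hj⟩
  exact h j hj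

lemma partner_involutive (π : ELP n) : Function.Involutive (partner π) := by
  intro i
  by_cases h : ∃ j, π.role i = PRole.matched j
  · obtain ⟨j, hj⟩ := h
    rw [partner_matched hj, partner_matched (π.matched_symm i j hj)]
  · push_neg at h
    rw [partner_other h, partner_other h]

/-- weight used for `M_b` -/
def Wb (n : ℕ) (w : Fin n → Bool) : ℤ := ∑ i : Fin n, ((n : ℤ) - (i : ℕ)) * bz (w i)

/-- weight used for `M_t` -/
def Wt (n : ℕ) (w : Fin n → Bool) : ℤ := ∑ i : Fin n, ((i : ℕ) + 1 : ℤ) * (1 - bz (w i))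

lemma letterOf_left {π : ELP n} {i : Fin n} (h : π.role i = PRole.left) :
    letterOf π i = true := by unfold letterOf; rw [h]

lemma letterOf_right {π : ELP n} {i : Fin n} (h : π.role i = PRole.right) :
    letterOf π i = false := by unfold letterOf; rw [h]

lemma letterOf_matched {π : ELP n} {i j : Fin n} (h : π.role i = PRole.matched j) :
    letterOf π i = if j < i then true else false := by unfold letterOf; rw [h]

lemma lpf_lt {w w' : Fin n → Bool} (h : lpfFeasible w w') (hne : w ≠ w') :
    Wb n w' < Wb n w := by
  obtain ⟨π, ⟨hw', hw⟩, hlp⟩ := h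
  have hwi : ∀ i, w i = ! π.isSource i := fun i => (congrFun hw i).symm
  have hw'i : ∀ i, w' i = letterOf π.toELP i := fun i => (congrFun hw' i).symm
  set t : Fin n → ℤ := fun i => ((n : ℤ) - (i : ℕ)) * (bz (w i) - bz (w' i)) with ht
  have hkey : ∀ i, 0 ≤ t i + t (partner π.toELP i) ∧
      (w i ≠ w' i → 1 ≤ t i + t (partner π.toELP i)) := by
    intro i
    cases hr : π.toELP.role i with
    | left =>
      have hp : partner π.toELP i = i := partner_other (by simp [hr])
      have h1 : w' i = true := by rw [hw'i, letterOf_left hr]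
      have h2 : w i = true := by rw [hwi, hlp i hr]; rfl
      rw [hp]
      constructor
      · simp [ht, h1, h2]
      · intro hd; simp [h1, h2] at hd
    | right =>
      have hp : partner π.toELP i = i := partner_other (by simp [hr])
      have h1 : w' i = false := by rw [hw'i, letterOf_right hr]
      have hin : (i : ℤ) < n := by exact_mod_cast i.2
      rw [hp]
      cases h2 : w i with
      | false => constructor
                 · simp [ht, h1, h2]
                 · intro hd; simp [h1, h2] at hd
      | true => constructor
                · simp [ht, h1, h2] <;> omega
                · intro _; simp [ht, h1, h2] <;> omega
    | matched j =>
      have hp : partner π.toELP i = j := partner_matched hr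
      have hrj : π.toELP.role j = PRole.matched i := π.toELP.matched_symm i j hr
      have hne' : i ≠ j := π.toELP.matched_ne i j hr
      have hwj : w j = ! (w i) := by
        rw [hwi, hwi, π.pair_mixed i j hr]
        simp
      have h1 : w' i = if j < i then true else false := by rw [hw'i, letterOf_matched hr]
      have h2 : w' j = if i < j then true else false := by rw [hw'i, letterOf_matched hrj]
      have hin : (i : ℤ) < n := by exact_mod_cast i.2
      have hjn : (j : ℤ) < n := by exact_mod_cast j.2
      rw [hp]
      rcases lt_or_gt_of_ne hne' with hij | hij
    -- i < j
      · have hij' : (i : ℤ) < (j : ℤ) := by exact_mod_cast hij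
        have hnji : ¬ (j < i) := by intro hc; exact absurd (lt_trans hij hc) (lt_irrefl _)
        rw [if_neg hnji] at h1
        rw [if_pos hij] at h2
        cases h3 : w i with
        | true =>
          have h4 : w j = false := by rw [hwj, h3]; rfl
          constructor
          · simp [ht, h1, h2, h3, h4] <;> omega
          · intro _; simp [ht, h1, h2, h3, h4] <;> omega
        | false =>
          have h4 : w j = true := by rw [hwj, h3]; rfl
          constructor
          · simp [ht, h1, h2, h3, h4]
          · intro hd; simp [h1, h3] at hd
      · have hij' : (j : ℤ) < (i : ℤ) := by exact_mod_cast hij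
        have hnij : ¬ (i < j) := by intro hc; exact absurd (lt_trans hij hc) (lt_irrefl _)
        rw [if_pos hij] at h1
        rw [if_neg hnij] at h2
        cases h3 : w i with
        | true =>
          have h4 : w j = false := by rw [hwj, h3]; rfl
          constructor
          · simp [ht, h1, h2, h3, h4]
          · intro hd; simp [h1, h3] at hd
        | false =>
          have h4 : w j = true := by rw [hwj, h3]; rfl
          constructor
          · simp [ht, h1, h2, h3, h4] <;> omega
          · intro _; simp [ht, h1, h2, h3, h4] <;> omega
  have hex : ∃ i, w i ≠ w' i := by
    by_contra hc
    push_neg at hc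
    exact hne (funext hc)
  obtain ⟨i0, hi0⟩ := hex
  have hpos : 0 < ∑ i, t i :=
    sum_pos_aux (partner π.toELP) (partner_involutive _) t (fun i => (hkey i).1)
      i0 ((hkey i0).2 hi0)
  have hsub : ∑ i, t i = Wb n w - Wb n w' := by
    rw [Wb, Wb, ← Finset.sum_sub_distrib]
    exact Finset.sum_congr rfl (fun i _ => by rw [ht]; ring)
  omega

lemma rpf_lt {w w' : Fin n → Bool} (h : rpfFeasible w w') (hne : w ≠ w') :
    Wt n w' < Wt n w := by
  obtain ⟨π, ⟨hw', hw⟩, hrp⟩ := h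
  have hwi : ∀ i, w i = ! π.isSource i := fun i => (congrFun hw i).symm
  have hw'i : ∀ i, w' i = letterOf π.toELP i := fun i => (congrFun hw' i).symm
  set t : Fin n → ℤ := fun i => ((i : ℕ) + 1 : ℤ) * (bz (w' i) - bz (w i)) with ht
  have hkey : ∀ i, 0 ≤ t i + t (partner π.toELP i) ∧
      (w i ≠ w' i → 1 ≤ t i + t (partner π.toELP i)) := by
    intro i
    cases hr : π.toELP.role i with
    | right =>
      have hp : partner π.toELP i = i := partner_other (by simp [hr])
      have h1 : w' i = false := by rw [hw'i, letterOf_right hr]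
      have h2 : w i = false := by rw [hwi, hrp i hr]; rfl
      rw [hp]
      constructor
      · simp [ht, h1, h2]
      · intro hd; simp [h1, h2] at hd
    | left =>
      have hp : partner π.toELP i = i := partner_other (by simp [hr])
      have h1 : w' i = true := by rw [hw'i, letterOf_left hr]
      rw [hp]
      cases h2 : w i with
      | true => constructor
                · simp [ht, h1, h2]
                · intro hd; simp [h1, h2] at hd
      | false => constructor
                 · simp [ht, h1, h2] <;> positivity
                 · intro _; simp [ht, h1, h2] <;> omega
    | matched j =>
      have hp : partner π.toELP i = j := partner_matched hr
      have hrj : π.toELP.role j = PRole.matched i := π.toELP.matched_symm i j hr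
      have hne' : i ≠ j := π.toELP.matched_ne i j hr
      have hwj : w j = ! (w i) := by
        rw [hwi, hwi, π.pair_mixed i j hr]
        simp
      have h1 : w' i = if j < i then true else false := by rw [hw'i, letterOf_matched hr]
      have h2 : w' j = if i < j then true else false := by rw [hw'i, letterOf_matched hrj]
      rw [hp]
      rcases lt_or_gt_of_ne hne' with hij | hij
      · have hij' : (i : ℤ) < (j : ℤ) := by exact_mod_cast hij
        have hnji : ¬ (j < i) := by intro hc; exact absurd (lt_trans hij hc) (lt_irrefl _)
        rw [if_neg hnji] at h1
        rw [if_pos hij] at h2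
        cases h3 : w i with
        | true =>
          have h4 : w j = false := by rw [hwj, h3]; rfl
          constructor
          · simp [ht, h1, h2, h3, h4] <;> omega
          · intro _; simp [ht, h1, h2, h3, h4] <;> omega
        | false =>
          have h4 : w j = true := by rw [hwj, h3]; rfl
          constructor
          · simp [ht, h1, h2, h3, h4]
          · intro hd; simp [h1, h3] at hd
      · have hij' : (j : ℤ) < (i : ℤ) := by exact_mod_cast hij
        have hnij : ¬ (i < j) := by intro hc; exact absurd (lt_trans hij hc) (lt_irrefl _)
        rw [if_pos hij] at h1
        rw [if_neg hnij] at h2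
        cases h3 : w i with
        | false =>
          have h4 : w j = true := by rw [hwj, h3]; rfl
          constructor
          · simp [ht, h1, h2, h3, h4] <;> omega
          · intro _; simp [ht, h1, h2, h3, h4] <;> omega
        | true =>
          have h4 : w j = false := by rw [hwj, h3]; rfl
          constructor
          · simp [ht, h1, h2, h3, h4]
          · intro hd; simp [h1, h3] at hd
  have hex : ∃ i, w i ≠ w' i := by
    by_contra hc
    push_neg at hc
    exact hne (funext hc)
  obtain ⟨i0, hi0⟩ := hex
  have hpos : 0 < ∑ i, t i :=
    sum_pos_aux (partner π.toELP) (partner_involutive _) t (fun i => (hkey i).1)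
      i0 ((hkey i0).2 hi0)
  have hsub : ∑ i, t i = Wt n w - Wt n w' := by
    rw [Wt, Wt, ← Finset.sum_sub_distrib]
    exact Finset.sum_congr rfl (fun i _ => by rw [ht]; ring)
  omega

end Weights

section Det

variable {n : ℕ}

lemma isUnit_of_weight (M : Matrix (Fin n → Bool) (Fin n → Bool) (RatFunc ℚ))
    (W : (Fin n → Bool) → ℤ)
    (htri : ∀ w w', M w w' ≠ 0 → w = w' ∨ W w' < W w)
    (hdiag : ∀ w, M w w ≠ 0) : IsUnit M := by
  classical
  set C : ℤ := (Fintype.card (Fin n → Bool) : ℤ) with hC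
  have hC1 : 1 ≤ C := by
    have : 0 < Fintype.card (Fin n → Bool) := Fintype.card_pos
    rw [hC]
    exact_mod_cast this
  set e := Fintype.equivFin (Fin n → Bool) with he
  set K : (Fin n → Bool) → ℤ := fun w => C * W w + ((e w : ℕ) : ℤ) with hK
  have hbound : ∀ w, 0 ≤ ((e w : ℕ) : ℤ) ∧ ((e w : ℕ) : ℤ) < C := fun w =>
    ⟨Int.ofNat_nonneg _, by rw [hC]; exact_mod_cast (e w).2⟩
  have hmono : ∀ u v, W u < W v → K u < K v := by
    intro u v h
    have h1 := (hbound u).2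
    have h2 := (hbound v).1
    have h3 : C * (W u + 1) ≤ C * W v :=
      mul_le_mul_of_nonneg_left (by omega) (by omega)
    simp only [hK]
    nlinarith
  have hinj : Function.Injective K := by
    intro u v h
    have hW : W u = W v := by
      by_contra hne
      rcases lt_or_gt_of_ne hne with hlt | hlt
      · exact absurd h (ne_of_lt (hmono _ _ hlt))
      · exact absurd h.symm (ne_of_lt (hmono _ _ hlt))
    have hE : ((e u : ℕ) : ℤ) = ((e v : ℕ) : ℤ) := by
      simp only [hK, hW] at h
      exact add_left_cancel h
    have hE2 : e u = e v := Fin.ext (by exact_mod_cast hE)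
    exact e.injective hE2
  have hBT : M.BlockTriangular (fun w => -K w) := by
    intro u v h
    by_contra hM
    rcases htri u v hM with heq | hlt
    · rw [heq] at h; exact absurd h (lt_irrefl _)
    · have h2 := hmono _ _ hlt
      simp only at h
      omega
  have hdet : M.det ≠ 0 := by
    rw [hBT.det]
    apply Finset.prod_ne_zero_iff.2
    intro a ha
    obtain ⟨u, -, hu⟩ := Finset.mem_image.1 ha
    haveI : Unique {w // (fun w => -K w) w = a} :=
      { default := ⟨u, hu⟩
        uniq := fun x => Subtype.ext (hinj (neg_injective (x.2.trans hu.symm))) }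
    rw [Matrix.det_unique]
    have hval : ((default : {w // (fun w => -K w) w = a}) : Fin n → Bool) = u :=
      hinj (neg_injective (((default : {w // (fun w => -K w) w = a}).prop).trans hu.symm))
    simpa [Matrix.toSquareBlock, Matrix.toSquareBlockProp, hval] using hdiag u
  exact (Matrix.isUnit_iff_isUnit_det M).2 (isUnit_iff_ne_zero.2 hdet)

lemma lpfFeasible_self (w : Fin n → Bool) : lpfFeasible w w := by
  refine ⟨delpOf w, ⟨wmapF_delpOf w, sswF_delpOf w⟩, fun i h => ?_⟩
  have h3 := (roleOf_left_iff.1 h).2.2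
  show (! (w i)) = false
  rw [h3]
  rfl

lemma rpfFeasible_self (w : Fin n → Bool) : rpfFeasible w w := by
  refine ⟨delpOf w, ⟨wmapF_delpOf w, sswF_delpOf w⟩, fun i h => ?_⟩
  have h3 := (roleOf_right_iff.1 h).2.2
  show (! (w i)) = true
  rw [h3]
  rfl

end Det


/-- For every positive integer `n`, the matrices `M_b(n)` and
`M_t(n)` are invertible over `ℚ(q)`. -/
theorem Mb_Mt_invertible (n : ℕ) (hn : 0 < n) : IsUnit (Mb n) ∧ IsUnit (Mt n) := by
  constructor
  · apply isUnit_of_weight (Mb n) (Wb n)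
    · intro w w' hM
      by_cases hww : w = w'
      · exact Or.inl hww
      · refine Or.inr ?_
        have hf : lpfFeasible w w' := by
          by_contra hc
          exact hM (by simp [Mb, hc])
        exact lpf_lt hf hww
    · intro w
      have hf : lpfFeasible w w := lpfFeasible_self w
      simp only [Mb, Matrix.of_apply, if_pos hf]
      exact pow_ne_zero _ RatFunc.X_ne_zero
  · apply isUnit_of_weight (Mt n) (Wt n)
    · intro w w' hM
      by_cases hww : w = w'
      · exact Or.inl hww
      · refine Or.inr ?_
        have hf : rpfFeasible w w' := by
          by_contra hc
          exact hM (by simp [Mt, hc])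
        exact rpf_lt hf hww
    · intro w
      have hf : rpfFeasible w w := rpfFeasible_self w
      simp only [Mt, Matrix.of_apply, if_pos hf]
      exact zpow_ne_zero _ RatFunc.X_ne_zero

end
end HFPLpaper2014
end

section
/- Let (l_T,t,r_T;r_B,b,l_B) be a sextuple of 01-words of lengths (K,L,M;N,K+L−N,M+N−K) with |l_T|_0 + |t|_0 = |b|_0 + |r_B|_0 and |t|_1 + |r_T|_1 = |l_B|_1 + |b|_1. In every hexagonal blue-red path-tangle with boundary (l_T,t,r_T;r_B,b,l_B), the total number of (−1,−1)-steps and (−2,0)-steps over all blue paths equals d(r_B) + d(b) + |r_B|_0·|b|_1 − d(l_T) − d(t) − |l_T|_1·|t|_0, and the total number of (1,−1)-steps and (2,0)-steps over all red paths equals d(b) + d(l_B) + |b|_0·|l_B|_1 − d(t) − d(r_T) − |t|_1·|r_T|_0. -/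
open scoped Classical

namespace HFPLpaper2014

noncomputable section

/-! ### Hexagonal blue-red path-tangles.  All coordinates are doubled so that
the half-integer coordinates of the paper become integers. -/

/-- the (1-based) positions of the letter 0 in a word, in increasing order -/
def zeroPos (w : Word) : List ℕ :=
  ((List.range w.length).filter (fun i => !(w.getD i true))).map (fun i => i + 1)

/-- the (1-based) positions of the letter 1 in a word, in increasing order -/
def onePos (w : Word) : List ℕ :=
  ((List.range w.length).filter (fun i => w.getD i false)).map (fun i => i + 1)

/-- the starting point `D_{k+1}` of the `(k+1)`-st blue path (doubled coordinates) -/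
def Db (K L M N : ℕ) (rB b : Word) (k : ℕ) : ℤ × ℤ :=
  let i : ℤ := ((zeroPos (b ++ rB)).getD k 0 : ℤ)
  if k < c0 b then (2 * ((M : ℤ) + N - K) - 3 + 4 * i, 2 * ((K : ℤ) - M - N))
  else (2 * ((M : ℤ) + L) - 1 + 2 * i, -(2 * ((M : ℤ) + L)) - 2 + 2 * i)

/-- the ending point `E_{k+1}` of the `(k+1)`-st blue path (doubled coordinates) -/
def Eb (K : ℕ) (lT t : Word) (k : ℕ) : ℤ × ℤ :=
  let j : ℤ := ((zeroPos (lT ++ t)).getD k 0 : ℤ)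
  if k < c0 lT then (2 * j - 1, 2 * j - 2) else (4 * j - 2 * (K : ℤ) - 1, 2 * (K : ℤ) - 2)

/-- the starting point `D'_{k+1}` of the `(k+1)`-st red path (doubled coordinates) -/
def Dr (K M N : ℕ) (lB b : Word) (k : ℕ) : ℤ × ℤ :=
  let i : ℤ := ((onePos (lB ++ b)).getD k 0 : ℤ)
  if k < c1 lB then (2 * i - 1, -(2 * i))
  else (4 * i + 2 * ((K : ℤ) - M - N) - 1, 2 * ((K : ℤ) - M - N))

/-- the ending point `E'_{k+1}` of the `(k+1)`-st red path (doubled coordinates) -/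
def Er (K L : ℕ) (t rT : Word) (k : ℕ) : ℤ × ℤ :=
  let j : ℤ := ((onePos (t ++ rT)).getD k 0 : ℤ)
  if k < c1 t then (2 * (K : ℤ) + 4 * j - 3, 2 * (K : ℤ) - 2)
  else (2 * ((K : ℤ) + L) + 2 * j - 1, 2 * ((K : ℤ) + L) - 2 * j)

/-- the list of steps of a path given by its list of vertices -/
def psteps (p : List (ℤ × ℤ)) : List ((ℤ × ℤ) × (ℤ × ℤ)) := p.zip p.tail

/-- A blue path from `D` to `E`, using the (doubled) steps `(-2,2)`, `(-2,-2)` and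
`(-4,0)` and staying between the (doubled) lines `y = 2(K-M-N)` and `y = 2K-2`. -/
def IsBPath (K M N : ℕ) (D E : ℤ × ℤ) (p : List (ℤ × ℤ)) : Prop :=
  p.head? = some D ∧ p.getLast? = some E ∧
  List.Chain' (fun a c => c = (a.1 - 2, a.2 + 2) ∨ c = (a.1 - 2, a.2 - 2) ∨
    c = (a.1 - 4, a.2)) p ∧
  ∀ q ∈ p, 2 * ((K : ℤ) - M - N) ≤ q.2 ∧ q.2 ≤ 2 * (K : ℤ) - 2

/-- A red path from `D` to `E`, using the (doubled) steps `(2,2)`, `(2,-2)` and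
`(4,0)` and staying between the same lines. -/
def IsRPath (K M N : ℕ) (D E : ℤ × ℤ) (p : List (ℤ × ℤ)) : Prop :=
  p.head? = some D ∧ p.getLast? = some E ∧
  List.Chain' (fun a c => c = (a.1 + 2, a.2 + 2) ∨ c = (a.1 + 2, a.2 - 2) ∨
    c = (a.1 + 4, a.2)) p ∧
  ∀ q ∈ p, 2 * ((K : ℤ) - M - N) ≤ q.2 ∧ q.2 ≤ 2 * (K : ℤ) - 2

/-- a point is used by a path if it is a vertex of the path or the midpoint of one
of its horizontal steps -/
def usedPt (p : List (ℤ × ℤ)) (q : ℤ × ℤ) : Prop :=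
  q ∈ p ∨ ∃ s ∈ psteps p, (s.2 = (s.1.1 - 4, s.1.2) ∧ q = (s.1.1 - 2, s.1.2)) ∨
    (s.2 = (s.1.1 + 4, s.1.2) ∧ q = (s.1.1 + 2, s.1.2))

/-- a blue diagonal step `s` and a red diagonal step `u` cross: they have the same
midpoint and are perpendicular -/
def crossing (s u : (ℤ × ℤ) × (ℤ × ℤ)) : Prop :=
  (s.2 = (s.1.1 - 2, s.1.2 + 2) ∧ u.2 = (u.1.1 + 2, u.1.2 + 2) ∧
    s.1.1 - 1 = u.1.1 + 1 ∧ s.1.2 + 1 = u.1.2 + 1) ∨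
  (s.2 = (s.1.1 - 2, s.1.2 - 2) ∧ u.2 = (u.1.1 + 2, u.1.2 - 2) ∧
    s.1.1 - 1 = u.1.1 + 1 ∧ s.1.2 - 1 = u.1.2 - 1)

/-- A hexagonal blue-red path-tangle with boundary `(l_T,t,r_T;r_B,b,l_B)`. -/
structure BlueRed (K L M N : ℕ) (lT t rT rB b lB : Word) where
  Bp : Fin (c0 lT + c0 t) → List (ℤ × ℤ)
  Rp : Fin (c1 t + c1 rT) → List (ℤ × ℤ)
  bluePath : ∀ k : Fin (c0 lT + c0 t),
    IsBPath K M N (Db K L M N rB b (k : ℕ)) (Eb K lT t (k : ℕ)) (Bp k)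
  redPath : ∀ k : Fin (c1 t + c1 rT),
    IsRPath K M N (Dr K M N lB b (k : ℕ)) (Er K L t rT (k : ℕ)) (Rp k)
  blueDisj : ∀ k k', k ≠ k' → ∀ q, q ∈ Bp k → q ∉ Bp k'
  redDisj : ∀ k k', k ≠ k' → ∀ q, q ∈ Rp k → q ∉ Rp k'
  noCross : ∀ k k', ∀ s ∈ psteps (Bp k), ∀ u ∈ psteps (Rp k'), ¬ crossing s u
  blueMid : ∀ k, ∀ s ∈ psteps (Bp k), s.2 = (s.1.1 - 4, s.1.2) →
    ∃ k', usedPt (Rp k') (s.1.1 - 2, s.1.2)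
  redMid : ∀ k, ∀ s ∈ psteps (Rp k), s.2 = (s.1.1 + 4, s.1.2) →
    ∃ k', usedPt (Bp k') (s.1.1 + 2, s.1.2)

/-! Along a blue path the (doubled) quantity `x + y` drops by `4` on each `(-1,-1)`- and
`(-2,0)`-step and is constant on `(-1,1)`-steps, so the number of counted steps of the `k`-th
blue path is `i_k - j_k`, read off from its endpoints `D_k` and `E_k`. Summing over `k`, the
count is the sum of the positions of the zeros of `b r_B` minus that of `l_T t`; the positions
of the zeros of a word `w` add up to `|w|₀(|w|₀+1)/2 + d(w)`, and
`d(uv) = d(u) + |u|₁|v|₀ + d(v)`. The red paths are handled in the same way with `y - x` and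
the positions of the ones, which add up to `|w|₁(|w|₁+1)/2 + |w|₀|w|₁ - d(w)`. -/

lemma c0_append (u v : Word) : c0 (u ++ v) = c0 u + c0 v := List.count_append ..

lemma c1_append (u v : Word) : c1 (u ++ v) = c1 u + c1 v := List.count_append ..

lemma dinv_append (u v : Word) : dinv (u ++ v) = dinv u + c1 u * c0 v + dinv v := by
  induction u with
  | nil => simp [dinv, c1]
  | cons x u ih => cases x <;> simp [dinv, c1, c0, ih]; ring

lemma zeroPos_cons (x : Bool) (w : Word) :
    zeroPos (x :: w) = (if x then [] else [1]) ++ (zeroPos w).map (· + 1) := by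
  cases x <;>
    simp [zeroPos, List.range_succ_eq_map, List.filter_map, List.map_map, Function.comp_def]

lemma length_zeroPos (w : Word) : (zeroPos w).length = c0 w := by
  induction w with
  | nil => rfl
  | cons x w ih => cases x <;> simp [zeroPos_cons, c0, ih]

lemma two_mul_sum_zeroPos (w : Word) :
    2 * ((zeroPos w).sum : ℤ) = c0 w * (c0 w + 1) + 2 * dinv w := by
  induction w with
  | nil => rfl
  | cons x w ih =>
    have hshift : ((zeroPos w).map (· + 1)).sum = (zeroPos w).sum + c0 w := by
      simp [List.sum_map_add, length_zeroPos]
    cases x <;> simp [zeroPos_cons, dinv, c0, hshift] at ih ⊢ <;> nlinarith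

lemma onePos_eq_zeroPos_wbar (w : Word) : onePos w = zeroPos (wbar w) := by
  simp only [onePos, zeroPos, wbar, List.length_map, List.getD_eq_getElem?_getD,
    List.getElem?_map]
  congr 1
  exact List.filter_congr fun i _ => by cases w[i]? <;> simp

lemma c0_wbar (w : Word) : c0 (wbar w) = c1 w := by
  induction w with
  | nil => rfl
  | cons x w ih => cases x <;> simp_all [wbar, c0, c1]

lemma dinv_add_dinv_wbar (w : Word) : dinv w + dinv (wbar w) = c0 w * c1 w := by
  induction w with
  | nil => rfl
  | cons x w ih =>
    have := c0_wbar w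
    cases x <;> simp_all [wbar, dinv, c0, c1] <;> linarith

lemma length_onePos (w : Word) : (onePos w).length = c1 w := by
  rw [onePos_eq_zeroPos_wbar, length_zeroPos, c0_wbar]

lemma two_mul_sum_onePos (w : Word) :
    2 * ((onePos w).sum : ℤ) = c1 w * (c1 w + 1) + 2 * (c0 w * c1 w - dinv w) := by
  have h := dinv_add_dinv_wbar w
  rw [onePos_eq_zeroPos_wbar, two_mul_sum_zeroPos, c0_wbar]
  zify at h
  linarith

lemma sum_zeroPos_append_sub_sum_zeroPos_append (u v u' v' : Word)
    (h : c0 u + c0 v = c0 u' + c0 v') :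
    ((zeroPos (u ++ v)).sum : ℤ) - (zeroPos (u' ++ v')).sum =
      (dinv u + c1 u * c0 v + dinv v : ℕ) - (dinv u' + c1 u' * c0 v' + dinv v' : ℕ) := by
  have hl := two_mul_sum_zeroPos (u ++ v)
  have hr := two_mul_sum_zeroPos (u' ++ v')
  rw [c0_append, dinv_append, h] at hl
  rw [c0_append, dinv_append] at hr
  linarith

lemma sum_onePos_append_sub_sum_onePos_append (u v u' v' : Word)
    (h : c1 u + c1 v = c1 u' + c1 v') (hlen : u.length + v.length = u'.length + v'.length) :
    ((onePos (u ++ v)).sum : ℤ) - (onePos (u' ++ v')).sum =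
      (dinv u' + c1 u' * c0 v' + dinv v' : ℕ) - (dinv u + c1 u * c0 v + dinv v : ℕ) := by
  have h0 : c0 (u ++ v) = c0 (u' ++ v') := by
    have := c0_add_c1 (u ++ v); have := c0_add_c1 (u' ++ v')
    simp only [c1_append, List.length_append] at *
    omega
  have hl := two_mul_sum_onePos (u ++ v)
  have hr := two_mul_sum_onePos (u' ++ v')
  rw [c1_append, dinv_append, h, h0] at hl
  rw [c1_append, dinv_append] at hr
  linarith

lemma potential_head_eq_of_isChain {α : Type*} {R : α → α → Prop} (f : α → ℤ)
    (P : α × α → Bool) (w : ℤ) (hstep : ∀ a c, R a c → f a = f c + if P (a, c) then w else 0) :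
    ∀ {p : List α} {D E : α}, p.IsChain R → p.head? = some D → p.getLast? = some E →
      f D = f E + w * (p.zip p.tail).countP P
  | [], _, _, _, hD, _ => by simp at hD
  | [a], D, E, _, hD, hE => by simp_all
  | a :: c :: r, D, E, hp, hD, hE => by
    obtain rfl : a = D := by simpa using hD
    rw [List.isChain_cons_cons] at hp
    have ih := potential_head_eq_of_isChain f P w hstep hp.2 rfl
      (by rwa [List.getLast?_cons_cons] at hE)
    rw [hstep a c hp.1, ih]
    simp only [List.tail_cons, List.zip_cons_cons, List.countP_cons]
    split <;> push_cast <;> ring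

lemma sum_getD_fin (l : List ℕ) {n : ℕ} (h : l.length = n) :
    ∑ k : Fin n, (l.getD k 0 : ℤ) = l.sum := by
  subst h
  simp

lemma sum_fin_eq_sum_sub_sum {n : ℕ} (c : Fin n → ℤ) (u v : List ℕ) (hu : u.length = n)
    (hv : v.length = n) (hc : ∀ k : Fin n, c k = u.getD k 0 - v.getD k 0) :
    ∑ k, c k = u.sum - v.sum := by
  rw [Finset.sum_congr rfl fun k _ => hc k, Finset.sum_sub_distrib, sum_getD_fin u hu,
    sum_getD_fin v hv]

def blueDrop (s : (ℤ × ℤ) × (ℤ × ℤ)) : Bool :=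
  decide (s.2 = (s.1.1 - 2, s.1.2 - 2) ∨ s.2 = (s.1.1 - 4, s.1.2))

def redDrop (s : (ℤ × ℤ) × (ℤ × ℤ)) : Bool :=
  decide (s.2 = (s.1.1 + 2, s.1.2 - 2) ∨ s.2 = (s.1.1 + 4, s.1.2))

lemma Db_fst_add_snd (K L M N : ℕ) (rB b : Word) (k : ℕ) :
    (Db K L M N rB b k).1 + (Db K L M N rB b k).2 =
      4 * ((zeroPos (b ++ rB)).getD k 0 : ℤ) - 3 := by
  unfold Db; split <;> simp <;> ring

lemma Eb_fst_add_snd (K : ℕ) (lT t : Word) (k : ℕ) :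
    (Eb K lT t k).1 + (Eb K lT t k).2 = 4 * ((zeroPos (lT ++ t)).getD k 0 : ℤ) - 3 := by
  unfold Eb; split <;> simp <;> ring

lemma Dr_snd_sub_fst (K M N : ℕ) (lB b : Word) (k : ℕ) :
    (Dr K M N lB b k).2 - (Dr K M N lB b k).1 =
      1 - 4 * ((onePos (lB ++ b)).getD k 0 : ℤ) := by
  unfold Dr; split <;> simp <;> ring

lemma Er_snd_sub_fst (K L : ℕ) (t rT : Word) (k : ℕ) :
    (Er K L t rT k).2 - (Er K L t rT k).1 = 1 - 4 * ((onePos (t ++ rT)).getD k 0 : ℤ) := by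
  unfold Er; split <;> simp <;> ring

lemma IsBPath.countP_blueDrop {K M N : ℕ} {D E : ℤ × ℤ} {p : List (ℤ × ℤ)}
    (hp : IsBPath K M N D E p) :
    D.1 + D.2 = E.1 + E.2 + 4 * (psteps p).countP blueDrop := by
  obtain ⟨hD, hE, hchain, -⟩ := hp
  refine potential_head_eq_of_isChain (fun q => q.1 + q.2) blueDrop 4 ?_ hchain hD hE
  rintro a c (rfl | rfl | rfl) <;> simp [blueDrop, Prod.ext_iff] <;> omega

lemma IsRPath.countP_redDrop {K M N : ℕ} {D E : ℤ × ℤ} {p : List (ℤ × ℤ)}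
    (hp : IsRPath K M N D E p) :
    D.2 - D.1 = E.2 - E.1 + 4 * (psteps p).countP redDrop := by
  obtain ⟨hD, hE, hchain, -⟩ := hp
  refine potential_head_eq_of_isChain (fun q => q.2 - q.1) redDrop 4 ?_ hchain hD hE
  rintro a c (rfl | rfl | rfl) <;> simp [redDrop, Prod.ext_iff] <;> omega

namespace BlueRed

variable {K L M N : ℕ} {lT t rT rB b lB : Word} (br : BlueRed K L M N lT t rT rB b lB)

lemma sum_countP_blueDrop (h : c0 lT + c0 t = c0 b + c0 rB) :
    ∑ k, ((psteps (br.Bp k)).countP blueDrop : ℤ) =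
      (zeroPos (b ++ rB)).sum - (zeroPos (lT ++ t)).sum := by
  refine sum_fin_eq_sum_sub_sum _ _ _ ?_ ?_ fun k => ?_
  · rw [length_zeroPos, c0_append, h]
  · rw [length_zeroPos, c0_append]
  · have := (br.bluePath k).countP_blueDrop
    rw [Db_fst_add_snd, Eb_fst_add_snd] at this
    linarith

lemma sum_countP_redDrop (h : c1 t + c1 rT = c1 lB + c1 b) :
    ∑ k, ((psteps (br.Rp k)).countP redDrop : ℤ) =
      (onePos (t ++ rT)).sum - (onePos (lB ++ b)).sum := by
  refine sum_fin_eq_sum_sub_sum _ _ _ ?_ ?_ fun k => ?_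
  · rw [length_onePos, c1_append]
  · rw [length_onePos, c1_append, h]
  · have := (br.redPath k).countP_redDrop
    rw [Dr_snd_sub_fst, Er_snd_sub_fst] at this
    linarith

end BlueRed

theorem blue_red_step_counts_general
    (K L M N : ℕ) (hKMN : K ≤ M + N) (hNKL : N ≤ K + L)
    (lT t rT rB b lB : Word)
    (ht : t.length = L) (hrT : rT.length = M)
    (hb : b.length = K + L - N) (hlB : lB.length = M + N - K)
    (h1 : c0 lT + c0 t = c0 b + c0 rB) (h2 : c1 t + c1 rT = c1 lB + c1 b)
    (br : BlueRed K L M N lT t rT rB b lB) :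
    ((∑ k : Fin (c0 lT + c0 t), ((psteps (br.Bp k)).countP
        (fun s => decide (s.2 = (s.1.1 - 2, s.1.2 - 2) ∨ s.2 = (s.1.1 - 4, s.1.2))))) : ℤ) =
      (dinv rB : ℤ) + dinv b + (c0 rB : ℤ) * c1 b - dinv lT - dinv t -
        (c1 lT : ℤ) * c0 t ∧
    ((∑ k : Fin (c1 t + c1 rT), ((psteps (br.Rp k)).countP
        (fun s => decide (s.2 = (s.1.1 + 2, s.1.2 - 2) ∨ s.2 = (s.1.1 + 4, s.1.2))))) : ℤ) =
      (dinv b : ℤ) + dinv lB + (c0 b : ℤ) * c1 lB - dinv t - dinv rT -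
        (c1 t : ℤ) * c0 rT := by
  change ∑ k, ((psteps (br.Bp k)).countP blueDrop : ℤ) = _ ∧
    ∑ k, ((psteps (br.Rp k)).countP redDrop : ℤ) = _
  constructor
  · rw [br.sum_countP_blueDrop h1,
      sum_zeroPos_append_sub_sum_zeroPos_append b rB lT t (by omega)]
    push_cast; ring
  · have hlen : t.length + rT.length = lB.length + b.length := by omega
    rw [br.sum_countP_redDrop h2, sum_onePos_append_sub_sum_onePos_append t rT lB b h2 hlen]
    push_cast; ring

/-- In every hexagonal blue-red path-tangle, the total number of
`(-1,-1)`- and `(-2,0)`-steps of the blue paths is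
`d(r_B) + d(b) + |r_B|₀|b|₁ - d(l_T) - d(t) - |l_T|₁|t|₀`, and the total number of
`(1,-1)`- and `(2,0)`-steps of the red paths is
`d(b) + d(l_B) + |b|₀|l_B|₁ - d(t) - d(r_T) - |t|₁|r_T|₀`.
(Coordinates are doubled, so these steps are `(-2,-2)`, `(-4,0)`, `(2,-2)`,
`(4,0)`.) -/
theorem blue_red_step_counts
    (K L M N : ℕ) (hKMN : K ≤ M + N) (hNKL : N ≤ K + L)
    (lT t rT rB b lB : Word)
    (hlT : lT.length = K) (ht : t.length = L) (hrT : rT.length = M)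
    (hrB : rB.length = N) (hb : b.length = K + L - N) (hlB : lB.length = M + N - K)
    (h1 : c0 lT + c0 t = c0 b + c0 rB) (h2 : c1 t + c1 rT = c1 lB + c1 b)
    (br : BlueRed K L M N lT t rT rB b lB) :
    ((∑ k : Fin (c0 lT + c0 t), ((psteps (br.Bp k)).countP
        (fun s => decide (s.2 = (s.1.1 - 2, s.1.2 - 2) ∨ s.2 = (s.1.1 - 4, s.1.2))))) : ℤ) =
      (dinv rB : ℤ) + dinv b + (c0 rB : ℤ) * c1 b - dinv lT - dinv t -
        (c1 lT : ℤ) * c0 t ∧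
    ((∑ k : Fin (c1 t + c1 rT), ((psteps (br.Rp k)).countP
        (fun s => decide (s.2 = (s.1.1 + 2, s.1.2 - 2) ∨ s.2 = (s.1.1 + 4, s.1.2))))) : ℤ) =
      (dinv b : ℤ) + dinv lB + (c0 b : ℤ) * c1 lB - dinv t - dinv rT -
        (c1 t : ℤ) * c0 rT :=
  blue_red_step_counts_general K L M N hKMN hNKL lT t rT rB b lB ht hrT hb hlB h1 h2 br

end
end HFPLpaper2014
end
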